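/- arXiv:0809.3714 — 7 statements merged into one kernel-verified Lean document; each statement's English description precedes it below -/
import Mathlib

section
/- Conversely, let m_k (k=1,...,K) be given, a_k its exponential transform (a_0=1, k a_k = \sum_{j=1}^k m_j a_{k-j}), and let p, q be polynomials of degrees at most n_x and n_y with n_x + n_y = K and p(0)=q(0)=1. If the Taylor expansion of q(z)/p(z) at z=0 equals a_0 + a_1 z + ... + a_K z^K + O(z^{K+1}), then m_k = \sum_{j=1}^{\deg p} \tilde x_j^k - \sum_{j=1}^{\deg q} \tilde y_j^k for k=1,...,K, where \tilde x_j, \tilde y_j are the reciprocals of the roots of p and q, respectively. -/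
open Finset Polynomial PowerSeries

noncomputable section Stmt3Aux

/-- geometric series -/
lemma geom_mul (c : ℂ) :
    (PowerSeries.mk fun n => c ^ n) * ((1 : ℂ⟦X⟧) - PowerSeries.C c * PowerSeries.X) = 1 := by
  ext n
  rw [mul_sub, mul_one]
  cases n with
  | zero => simp
  | succ n =>
    rw [map_sub]
    have : (PowerSeries.mk fun n => c ^ n) * (PowerSeries.C c * PowerSeries.X)
        = PowerSeries.C c * (PowerSeries.X * PowerSeries.mk fun n => c ^ n) := by ring
    rw [this, PowerSeries.coeff_C_mul, PowerSeries.coeff_succ_X_mul]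
    simp [pow_succ, mul_comm]

lemma geom_inv (c : ℂ) :
    ((1 : ℂ⟦X⟧) - PowerSeries.C c * PowerSeries.X)⁻¹ = PowerSeries.mk fun n => c ^ n := by
  have h : PowerSeries.constantCoeff ((1 : ℂ⟦X⟧) - PowerSeries.C c * PowerSeries.X) ≠ 0 := by
    simp
  rw [PowerSeries.inv_eq_iff_mul_eq_one h]
  exact geom_mul c

end Stmt3Aux

noncomputable section Stmt3Aux2

lemma coeff_X_C_geom (c : ℂ) (k : ℕ) (hk : 1 ≤ k) :
    PowerSeries.coeff k (PowerSeries.X * PowerSeries.C c *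
      ((1:ℂ⟦X⟧) - PowerSeries.C c * PowerSeries.X)⁻¹) = c ^ k := by
  obtain ⟨n, rfl⟩ := Nat.exists_eq_add_of_le hk
  rw [geom_inv]
  have h2 : PowerSeries.X * PowerSeries.C c * (PowerSeries.mk fun n => c ^ n)
      = PowerSeries.X * (PowerSeries.C c * PowerSeries.mk fun n => c ^ n) := by ring
  rw [h2, add_comm 1 n, PowerSeries.coeff_succ_X_mul, PowerSeries.coeff_C_mul,
    PowerSeries.coeff_mk, pow_succ, mul_comm]

lemma logderiv_mul (f g : ℂ⟦X⟧) (hf : PowerSeries.constantCoeff f ≠ 0)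
    (hg : PowerSeries.constantCoeff g ≠ 0) :
    PowerSeries.X * (d⁄dX ℂ (f * g)) * (f * g)⁻¹ =
      PowerSeries.X * (d⁄dX ℂ f) * f⁻¹ + PowerSeries.X * (d⁄dX ℂ g) * g⁻¹ := by
  rw [Derivation.leibniz, PowerSeries.mul_inv_rev, smul_eq_mul, smul_eq_mul]
  have h1 : f * f⁻¹ = 1 := PowerSeries.mul_inv_cancel f hf
  have h2 : g * g⁻¹ = 1 := PowerSeries.mul_inv_cancel g hg
  linear_combination (PowerSeries.X * (d⁄dX ℂ g) * g⁻¹) * h1 +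
    (PowerSeries.X * (d⁄dX ℂ f) * f⁻¹) * h2

/-- product over multiset of reciprocal roots -/
def G (t : Multiset ℂ) : ℂ⟦X⟧ :=
  (t.map fun c => 1 - PowerSeries.C c * PowerSeries.X).prod

lemma constantCoeff_G (t : Multiset ℂ) : PowerSeries.constantCoeff (G t) = 1 := by
  induction t using Multiset.induction with
  | empty => simp [G]
  | cons c t ih =>
    rw [G, Multiset.map_cons, Multiset.prod_cons, map_mul]
    rw [G] at ih
    simp [ih]

lemma coeff_logderiv_G (t : Multiset ℂ) (k : ℕ) (hk : 1 ≤ k) :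
    PowerSeries.coeff k (PowerSeries.X * (d⁄dX ℂ (G t)) * (G t)⁻¹) =
      -(t.map fun c => c ^ k).sum := by
  induction t using Multiset.induction with
  | empty =>
    simp only [G, Multiset.map_zero, Multiset.prod_zero, Multiset.sum_zero, neg_zero]
    rw [Derivation.map_one_eq_zero]
    simp
  | cons c t ih =>
    have hGc : G (c ::ₘ t) = (1 - PowerSeries.C c * PowerSeries.X) * G t := by
      rw [G, Multiset.map_cons, Multiset.prod_cons]; rfl
    have hcc : PowerSeries.constantCoeff ((1:ℂ⟦X⟧) - PowerSeries.C c * PowerSeries.X) ≠ 0 := by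
      simp
    have hG : PowerSeries.constantCoeff (G t) ≠ 0 := by rw [constantCoeff_G]; exact one_ne_zero
    rw [hGc, logderiv_mul _ _ hcc hG, map_add, ih]
    have hd : d⁄dX ℂ ((1:ℂ⟦X⟧) - PowerSeries.C c * PowerSeries.X) = -PowerSeries.C c := by
      rw [map_sub, Derivation.map_one_eq_zero, Derivation.leibniz, smul_eq_mul, smul_eq_mul]
      simp
    rw [hd]
    have h3 : PowerSeries.X * -PowerSeries.C c *
        ((1:ℂ⟦X⟧) - PowerSeries.C c * PowerSeries.X)⁻¹ =
        -(PowerSeries.X * PowerSeries.C c *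
          ((1:ℂ⟦X⟧) - PowerSeries.C c * PowerSeries.X)⁻¹) := by ring
    rw [h3, map_neg, coeff_X_C_geom c k hk, Multiset.map_cons, Multiset.sum_cons]
    ring

end Stmt3Aux2

noncomputable section Stmt3Aux3

lemma poly_eq_G (f : ℂ[X]) (hf : f.eval 0 = 1) :
    (f : ℂ⟦X⟧) = G (f.roots.map fun r => r⁻¹) := by
  have hf0 : f ≠ 0 := fun h => by simp [h] at hf
  have hroots0 : ∀ r ∈ f.roots, r ≠ 0 := by
    intro r hr h0
    have h1 : f.IsRoot r := (mem_roots hf0).1 hr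
    rw [h0, IsRoot.def] at h1
    rw [h1] at hf
    exact zero_ne_one hf
  have hsplit := Splits.eq_prod_roots (IsAlgClosed.splits f)
  set gp : ℂ[X] := (f.roots.map fun a => 1 - Polynomial.C a⁻¹ * Polynomial.X).prod with hgp
  have hfactor : ∀ r ∈ f.roots,
      Polynomial.X - Polynomial.C r = Polynomial.C (-r) * (1 - Polynomial.C r⁻¹ * Polynomial.X) := by
    intro r hr
    have h0 := hroots0 r hr
    have hru : -r * r⁻¹ = -1 := by
      field_simp
    rw [mul_sub, mul_one, ← mul_assoc, ← C_mul, hru]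
    simp only [map_neg, map_one]
    ring
  have hmap : (f.roots.map fun a => Polynomial.X - Polynomial.C a) =
      f.roots.map fun a => Polynomial.C (-a) * (1 - Polynomial.C a⁻¹ * Polynomial.X) :=
    Multiset.map_congr rfl hfactor
  rw [hmap, Multiset.prod_map_mul] at hsplit
  have hCprod : (f.roots.map fun a => Polynomial.C (-a)).prod = Polynomial.C ((f.roots.map fun a => -a).prod) := by
    rw [map_multiset_prod (Polynomial.C : ℂ →+* ℂ[X]), Multiset.map_map]
    rfl
  rw [hCprod, ← mul_assoc, ← map_mul, ← hgp] at hsplit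
  set d : ℂ := f.leadingCoeff * (f.roots.map fun a => -a).prod with hd
  have hgp0 : gp.eval 0 = 1 := by
    rw [hgp, eval_multiset_prod, Multiset.map_map]
    calc ((f.roots.map ((fun g : ℂ[X] => g.eval 0) ∘ fun a => 1 - Polynomial.C a⁻¹ * Polynomial.X))).prod
        = (f.roots.map fun _ => (1:ℂ)).prod := by
          refine congrArg Multiset.prod (Multiset.map_congr rfl ?_)
          intro a _
          simp
      _ = 1 := by simp
  have hd1 : d = 1 := by
    have := hf
    rw [hsplit] at this
    rw [eval_mul, eval_C, hgp0, mul_one] at this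
    exact this
  rw [hd1, map_one, one_mul] at hsplit
  have hcoe : (gp : ℂ⟦X⟧) = G (f.roots.map fun r => r⁻¹) := by
    rw [G, Multiset.map_map]
    rw [hgp, ← Polynomial.coeToPowerSeries.ringHom_apply, map_multiset_prod, Multiset.map_map]
    refine congrArg Multiset.prod (Multiset.map_congr rfl ?_)
    intro a _
    simp only [Function.comp_apply, Polynomial.coeToPowerSeries.ringHom_apply,
      Polynomial.coe_sub, Polynomial.coe_one, Polynomial.coe_mul, Polynomial.coe_C,
      Polynomial.coe_X]
  have hfg : (f : ℂ⟦X⟧) = (gp : ℂ⟦X⟧) := by rw [hsplit]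
  exact hfg.trans hcoe

lemma coeff_logderiv_poly (f : ℂ[X]) (hf : f.eval 0 = 1) (k : ℕ) (hk : 1 ≤ k) :
    PowerSeries.coeff k
        (PowerSeries.X * (d⁄dX ℂ (f : ℂ⟦X⟧)) * (f : ℂ⟦X⟧)⁻¹) =
      -(f.roots.map fun r => r⁻¹ ^ k).sum := by
  rw [poly_eq_G f hf, coeff_logderiv_G _ k hk, Multiset.map_map]
  rfl

end Stmt3Aux3

noncomputable section Stmt3Aux4

lemma coe_map_powerseries (f : ℝ[X]) :
    ((f.map (algebraMap ℝ ℂ) : ℂ[X]) : ℂ⟦X⟧) = PowerSeries.map (algebraMap ℝ ℂ) (f : ℝ⟦X⟧) := by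
  ext n
  rw [Polynomial.coeff_coe, PowerSeries.coeff_map, Polynomial.coeff_coe, Polynomial.coeff_map]

lemma inv_map_powerseries (f : ℝ[X]) (hf : f.eval 0 = 1) :
    PowerSeries.map (algebraMap ℝ ℂ) ((f : ℝ⟦X⟧)⁻¹) =
      ((f.map (algebraMap ℝ ℂ) : ℂ[X]) : ℂ⟦X⟧)⁻¹ := by
  have hc : PowerSeries.constantCoeff (f : ℝ⟦X⟧) ≠ 0 := by
    rw [Polynomial.constantCoeff_coe, Polynomial.coeff_zero_eq_eval_zero, hf]
    exact one_ne_zero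
  have hC : PowerSeries.constantCoeff ((f.map (algebraMap ℝ ℂ) : ℂ[X]) : ℂ⟦X⟧) ≠ 0 := by
    rw [Polynomial.constantCoeff_coe, Polynomial.coeff_map, Polynomial.coeff_zero_eq_eval_zero, hf,
      map_one]
    exact one_ne_zero
  rw [PowerSeries.eq_inv_iff_mul_eq_one hC, coe_map_powerseries, ← map_mul,
    PowerSeries.inv_mul_cancel _ hc, map_one]

end Stmt3Aux4

/-- Conversely: if the Taylor expansion of `q/p` at `0` agrees with the exponential
transform `a_k` of the moments up to order `K = n_x + n_y`, where `deg p ≤ n_x`,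
`deg q ≤ n_y` and `p(0) = q(0) = 1`, then the reciprocal roots of `p` and `q`
(counted with multiplicity, over `ℂ`) reproduce the moments:
`m_k = ∑ x̃_j^k - ∑ ỹ_j^k` for `k = 1,…,K`. -/
theorem stmt_3 (nx ny : ℕ) (K : ℕ) (hK : K = nx + ny) (m a : ℕ → ℝ) (ha0 : a 0 = 1)
    (harec : ∀ k : ℕ, 1 ≤ k → k ≤ K → (k : ℝ) * a k = ∑ j ∈ Icc 1 k, m j * a (k - j))
    (p q : ℝ[X]) (hp0 : p.eval 0 = 1) (hq0 : q.eval 0 = 1)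
    (hpdeg : p.natDegree ≤ nx) (hqdeg : q.natDegree ≤ ny)
    (htaylor : ∀ k : ℕ, k ≤ K →
      PowerSeries.coeff (R := ℝ) k ((q : PowerSeries ℝ) * (p : PowerSeries ℝ)⁻¹) = a k) :
    ∀ k : ℕ, 1 ≤ k → k ≤ K →
      (m k : ℂ) =
        (((p.map (algebraMap ℝ ℂ)).roots.map fun r => r⁻¹ ^ k).sum -
          ((q.map (algebraMap ℝ ℂ)).roots.map fun r => r⁻¹ ^ k).sum) := by
  set P : ℂ[X] := p.map (algebraMap ℝ ℂ) with hPdef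
  set Q : ℂ[X] := q.map (algebraMap ℝ ℂ) with hQdef
  have hP0 : P.eval 0 = 1 := by
    rw [hPdef, Polynomial.eval_map, Polynomial.eval₂_at_zero,
      Polynomial.coeff_zero_eq_eval_zero, hp0, map_one]
  have hQ0 : Q.eval 0 = 1 := by
    rw [hQdef, Polynomial.eval_map, Polynomial.eval₂_at_zero,
      Polynomial.coeff_zero_eq_eval_zero, hq0, map_one]
  have hPc : PowerSeries.constantCoeff (P : ℂ⟦X⟧) ≠ 0 := by
    rw [Polynomial.constantCoeff_coe, Polynomial.coeff_zero_eq_eval_zero, hP0]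
    exact one_ne_zero
  have hQc : PowerSeries.constantCoeff (Q : ℂ⟦X⟧) ≠ 0 := by
    rw [Polynomial.constantCoeff_coe, Polynomial.coeff_zero_eq_eval_zero, hQ0]
    exact one_ne_zero
  have hP1 : (P : ℂ⟦X⟧) * (P : ℂ⟦X⟧)⁻¹ = 1 := PowerSeries.mul_inv_cancel _ hPc
  have hQ1 : (Q : ℂ⟦X⟧) * (Q : ℂ⟦X⟧)⁻¹ = 1 := PowerSeries.mul_inv_cancel _ hQc
  set A : ℂ⟦X⟧ := (Q : ℂ⟦X⟧) * (P : ℂ⟦X⟧)⁻¹ with hAdef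
  set Mser : ℂ⟦X⟧ :=
    PowerSeries.X * (d⁄dX ℂ (Q : ℂ⟦X⟧)) * (Q : ℂ⟦X⟧)⁻¹ -
      PowerSeries.X * (d⁄dX ℂ (P : ℂ⟦X⟧)) * (P : ℂ⟦X⟧)⁻¹ with hMdef
  -- coefficients of A agree with a
  have hA : ∀ n : ℕ, n ≤ K → PowerSeries.coeff n A = (a n : ℂ) := by
    intro n hn
    have hψ : A = PowerSeries.map (algebraMap ℝ ℂ)
        ((q : ℝ⟦X⟧) * (p : ℝ⟦X⟧)⁻¹) := by
      rw [map_mul, ← coe_map_powerseries, inv_map_powerseries p hp0, hAdef]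
    rw [hψ, PowerSeries.coeff_map, htaylor n hn]
    rfl
  -- logarithmic derivative identity
  have hlog : PowerSeries.X * (d⁄dX ℂ A) = Mser * A := by
    rw [hAdef, hMdef, Derivation.leibniz, smul_eq_mul, smul_eq_mul,
      PowerSeries.derivative_inv']
    linear_combination (-(PowerSeries.X * (d⁄dX ℂ (Q : ℂ⟦X⟧)) * (P : ℂ⟦X⟧)⁻¹)) * hQ1
  -- coefficients of Mser
  have hm'0 : PowerSeries.coeff 0 Mser = 0 := by
    have hx : ∀ f g : ℂ⟦X⟧, PowerSeries.coeff 0 (PowerSeries.X * f * g) = 0 := by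
      intro f g
      rw [mul_assoc, PowerSeries.coeff_zero_eq_constantCoeff, map_mul,
        PowerSeries.constantCoeff_X, zero_mul]
    rw [hMdef, map_sub, hx, hx, sub_self]
  have hm' : ∀ j : ℕ, 1 ≤ j → PowerSeries.coeff j Mser =
      ((P.roots.map fun r => r⁻¹ ^ j).sum - (Q.roots.map fun r => r⁻¹ ^ j).sum) := by
    intro j hj
    rw [hMdef, map_sub, coeff_logderiv_poly Q hQ0 j hj, coeff_logderiv_poly P hP0 j hj]
    ring
  -- the recursion over ℂ with coefficients of Mser
  have hrecC : ∀ k : ℕ, 1 ≤ k → k ≤ K →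
      (k : ℂ) * (a k : ℂ) = ∑ j ∈ Icc 1 k, PowerSeries.coeff j Mser * (a (k - j) : ℂ) := by
    intro k hk1 hkK
    obtain ⟨n, rfl⟩ : ∃ n, k = n + 1 := ⟨k - 1, (Nat.succ_pred_eq_of_pos hk1).symm⟩
    have hL : PowerSeries.coeff (n + 1) (PowerSeries.X * (d⁄dX ℂ A)) =
        ((n + 1 : ℕ) : ℂ) * (a (n + 1) : ℂ) := by
      rw [PowerSeries.coeff_succ_X_mul, PowerSeries.coeff_derivative, hA (n + 1) hkK]
      push_cast
      ring
    have hsub : Icc 1 (n + 1) ⊆ Finset.range (n + 2) := by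
      intro j hj
      rw [Finset.mem_range]
      exact Nat.lt_succ_of_le (Finset.mem_Icc.1 hj).2
    have hout : ∀ j ∈ Finset.range (n + 2), j ∉ Icc 1 (n + 1) →
        PowerSeries.coeff j Mser * PowerSeries.coeff (n + 1 - j) A = 0 := by
      intro j hjr hjn
      have hj0 : j = 0 := by
        by_contra h
        exact hjn (Finset.mem_Icc.2 ⟨Nat.one_le_iff_ne_zero.2 h,
          Nat.lt_succ_iff.1 (Finset.mem_range.1 hjr)⟩)
      rw [hj0, hm'0, zero_mul]
    have hR : PowerSeries.coeff (n + 1) (Mser * A) =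
        ∑ j ∈ Icc 1 (n + 1), PowerSeries.coeff j Mser * (a (n + 1 - j) : ℂ) := by
      rw [PowerSeries.coeff_mul, Finset.Nat.sum_antidiagonal_eq_sum_range_succ_mk,
        ← Finset.sum_subset hsub hout]
      refine Finset.sum_congr rfl ?_
      intro j _
      rw [hA (n + 1 - j) (le_trans (Nat.sub_le _ _) hkK)]
    rw [← hL, hlog, hR]
  -- final strong induction
  have hmain : ∀ k : ℕ, 1 ≤ k → k ≤ K → (m k : ℂ) = PowerSeries.coeff k Mser := by
    intro k
    induction k using Nat.strong_induction_on with
    | _ k ih =>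
      intro hk1 hkK
      have h2 : (k : ℂ) * (a k : ℂ) = ∑ j ∈ Icc 1 k, (m j : ℂ) * (a (k - j) : ℂ) := by
        have h := harec k hk1 hkK
        have h' := congrArg (Complex.ofReal) h
        push_cast at h' ⊢
        exact h'
      have h3 : ∑ j ∈ Icc 1 k, ((m j : ℂ) - PowerSeries.coeff j Mser) * (a (k - j) : ℂ)
          = 0 := by
        simp only [sub_mul]
        rw [Finset.sum_sub_distrib, ← h2, ← hrecC k hk1 hkK, sub_self]
      obtain ⟨n, rfl⟩ : ∃ n, k = n + 1 := ⟨k - 1, (Nat.succ_pred_eq_of_pos hk1).symm⟩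
      rw [Finset.sum_Icc_succ_top (Nat.succ_le_succ (Nat.zero_le n))] at h3
      have hz : ∑ j ∈ Icc 1 n, ((m j : ℂ) - PowerSeries.coeff j Mser) * (a (n + 1 - j) : ℂ)
          = 0 := by
        refine Finset.sum_eq_zero ?_
        intro j hj
        obtain ⟨hj1, hjn⟩ := Finset.mem_Icc.1 hj
        rw [ih j (Nat.lt_succ_of_le hjn) hj1 (le_trans (hjn.trans (Nat.le_succ n)) hkK),
          sub_self, zero_mul]
      rw [hz, zero_add, Nat.sub_self, ha0] at h3
      push_cast at h3
      rw [mul_one] at h3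
      exact sub_eq_zero.1 h3
  intro k hk1 hkK
  rw [hmain k hk1 hkK, hm' k hk1]
end

section
/- Let p, q, \bar p, \bar q be real polynomials with p(0)=q(0)=\bar p(0)=\bar q(0)=1 and p \bar q = \bar p q. If deg \bar p \leq deg p and there is no polynomial r with p = \bar p r, then there exist polynomials \tilde p, \tilde q with \tilde p(0)=\tilde q(0)=1, \tilde p \bar q = \tilde q \bar p, deg \tilde p < deg p, and deg \tilde q < deg q. -/
open Polynomial

/-- If `p q̄ = p̄ q`, all normalized to `1` at the origin, `deg p̄ ≤ deg p`,
and `p̄` does not divide `p` exactly (there is no polynomial `r` with `p = p̄ r`),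
then there is another solution `(p̃, q̃)` of the same moment problem with
strictly smaller degrees. -/
theorem stmt_6 (p q pbar qbar : ℝ[X])
    (hp0 : p.eval 0 = 1) (hq0 : q.eval 0 = 1)
    (hpbar0 : pbar.eval 0 = 1) (hqbar0 : qbar.eval 0 = 1)
    (hrel : p * qbar = pbar * q)
    (hdeg : pbar.natDegree ≤ p.natDegree)
    (hnodiv : ¬ ∃ r : ℝ[X], p = pbar * r) :
    ∃ ptilde qtilde : ℝ[X], ptilde.eval 0 = 1 ∧ qtilde.eval 0 = 1 ∧
      ptilde * qbar = qtilde * pbar ∧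
      ptilde.natDegree < p.natDegree ∧ qtilde.natDegree < q.natDegree := by
  set g := EuclideanDomain.gcd p pbar with hg
  obtain ⟨p', hp'⟩ := EuclideanDomain.gcd_dvd_left p pbar
  obtain ⟨pb', hpb'⟩ := EuclideanDomain.gcd_dvd_right p pbar
  rw [← hg] at hp' hpb'
  -- evaluations at 0
  have hgp'0 : g.eval 0 * p'.eval 0 = 1 := by
    have := congrArg (eval 0) hp'; rw [hp0] at this; simpa using this.symm
  have hgpb'0 : g.eval 0 * pb'.eval 0 = 1 := by
    have := congrArg (eval 0) hpb'; rw [hpbar0] at this; simpa using this.symm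
  have hg0 : g.eval 0 ≠ 0 := left_ne_zero_of_mul_eq_one hgp'0
  have hp'0 : p'.eval 0 ≠ 0 := right_ne_zero_of_mul_eq_one hgp'0
  have hpb'0 : pb'.eval 0 ≠ 0 := right_ne_zero_of_mul_eq_one hgpb'0
  have hgne : g ≠ 0 := fun h => hg0 (by rw [h]; simp)
  have hp'ne : p' ≠ 0 := fun h => hp'0 (by rw [h]; simp)
  have hpb'ne : pb' ≠ 0 := fun h => hpb'0 (by rw [h]; simp)
  have hpne : p ≠ 0 := fun h => by simp [h] at hp0
  have hpbarne : pbar ≠ 0 := fun h => by simp [h] at hpbar0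
  have hqne : q ≠ 0 := fun h => by simp [h] at hq0
  -- coprimality of p' and pb' via Bezout
  have hcop : IsCoprime p' pb' := by
    have hb := EuclideanDomain.gcd_eq_gcd_ab p pbar
    rw [← hg] at hb
    generalize hA : EuclideanDomain.gcdA p pbar = a at hb
    generalize hB : EuclideanDomain.gcdB p pbar = b at hb
    refine ⟨a, b, ?_⟩
    have : g * 1 = g * (a * p' + b * pb') := by
      rw [mul_one]
      calc g = p * a + pbar * b := hb
      _ = g * (a * p' + b * pb') := by rw [hp', hpb']; ring
    exact (mul_left_cancel₀ hgne this).symm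
  -- pb' is nonconstant
  have hpb'deg : pb'.natDegree ≠ 0 := by
    intro h0
    apply hnodiv
    obtain ⟨c, hc⟩ : ∃ c : ℝ, pb' = C c := ⟨pb'.coeff 0, eq_C_of_natDegree_eq_zero h0⟩
    have hcne : c ≠ 0 := by intro h; rw [h] at hc; exact hpb'ne (by simp [hc])
    refine ⟨C c⁻¹ * p', ?_⟩
    rw [hpb', hc, hp']
    rw [show g * C c * (C c⁻¹ * p') = g * (C c * C c⁻¹) * p' by ring, ← C_mul,
      mul_inv_cancel₀ hcne]
    simp
  -- degree computations
  have hdegpbar : pbar.natDegree = g.natDegree + pb'.natDegree := by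
    rw [hpb', natDegree_mul hgne hpb'ne]
  have hdegp : p.natDegree = g.natDegree + p'.natDegree := by
    rw [hp', natDegree_mul hgne hp'ne]
  have hgdeg : g.natDegree < p.natDegree := by
    have : g.natDegree < pbar.natDegree := by omega
    omega
  -- cancel g in the relation
  have hrel' : p' * qbar = pb' * q := by
    apply mul_left_cancel₀ hgne
    calc g * (p' * qbar) = g * p' * qbar := by ring
    _ = pbar * q := by rw [← hp', hrel]
    _ = g * (pb' * q) := by rw [hpb']; ring
  -- pb' divides qbar
  obtain ⟨s, hs⟩ : pb' ∣ qbar := hcop.symm.dvd_of_dvd_mul_left ⟨q, hrel'⟩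
  have hq' : q = p' * s := by
    apply mul_left_cancel₀ hpb'ne
    rw [← hrel', hs]; ring
  have hpb's0 : pb'.eval 0 * s.eval 0 = 1 := by
    have := congrArg (eval 0) hs; rw [hqbar0] at this; simpa using this.symm
  have hs0 : s.eval 0 ≠ 0 := right_ne_zero_of_mul_eq_one hpb's0
  have hsne : s ≠ 0 := fun h => hs0 (by rw [h]; simp)
  -- g.eval 0 = s.eval 0
  have hgs0 : g.eval 0 = s.eval 0 := by
    have : g.eval 0 * (pb'.eval 0 * s.eval 0) = (g.eval 0 * pb'.eval 0) * s.eval 0 := by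
      ring
    rw [hpb's0, hgpb'0, mul_one, one_mul] at this
    exact this
  -- p' is nonconstant
  have hp'deg : p'.natDegree ≠ 0 := by
    intro h0
    have hgle : g.natDegree ≤ pbar.natDegree := natDegree_le_of_dvd ⟨pb', hpb'⟩ hpbarne
    omega
  have hsdeg : s.natDegree < q.natDegree := by
    have : q.natDegree = p'.natDegree + s.natDegree := by
      rw [hq', natDegree_mul hp'ne hsne]
    omega
  refine ⟨C (g.eval 0)⁻¹ * g, C (s.eval 0)⁻¹ * s, ?_, ?_, ?_, ?_, ?_⟩
  · simp [inv_mul_cancel₀ hg0]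
  · simp [inv_mul_cancel₀ hs0]
  · rw [hs, hpb', hgs0]; ring
  · rw [natDegree_C_mul (inv_ne_zero hg0)]; exact hgdeg
  · rw [natDegree_C_mul (inv_ne_zero hs0)]; exact hsdeg
end

section
/- If the matrix A_1 (as defined via the exponential transform of the moments) is nonsingular, then the moment problem m_k = \sum_{j=1}^{n_x} x_j^k - \sum_{j=1}^{n_y} y_j^k (k = 1,...,K = n_x+n_y) has a unique solution, up to reordering of the branch values. -/
/-!
Put `P = ∏ⱼ (1 - xⱼ X)`, `Q = ∏ᵢ (1 - yᵢ X)` and `F = Q / P`. The logarithmic derivative of `F`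
is `X F' / F = ∑ₖ (∑ⱼ xⱼᵏ - ∑ᵢ yᵢᵏ) Xᵏ`, so the Taylor coefficients of `F` obey the recurrence
that defines the exponential transform, and `a_k = [Xᵏ] F` for `k ≤ K = n_x + n_y`.

If `P` and `Q` had a common factor, cancelling it would give `F P₁ = Q₁` with
`deg P₁ < n_x`, `deg Q₁ < n_y`, and comparing the coefficients of `X^{n_y + i}` shows that the
coefficient vector of `P₁` lies in the kernel of `A_1`. So for nonsingular `A_1` the fraction
`Q / P` is reduced. For a second solution `F' = Q' / P'` with the same first `K + 1`
coefficients, `Q P' ≡ Q' P` modulo `X^{K+1}`, and both sides have degree at most `K`, so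
`Q P' = Q' P`. Coprimality and the normalisation `P(0) = P'(0) = 1` give `P = P'`, `Q = Q'`,
and the branch values are the reciprocal roots of these polynomials.
-/

open Finset

theorem Derivation.map_prod_eq_sum_mul_prod {R A ι : Type*} [CommSemiring R] [CommSemiring A]
    [Algebra R A] (D : Derivation R A A) (s : Finset ι) {f g : ι → A}
    (h : ∀ i ∈ s, D (f i) = g i * f i) :
    D (∏ i ∈ s, f i) = (∑ i ∈ s, g i) * ∏ i ∈ s, f i := by
  classical
  induction s using Finset.induction_on with
  | empty => simp
  | insert a s ha ih =>
    rw [prod_insert ha, sum_insert ha, D.leibniz, smul_eq_mul, smul_eq_mul,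
      h a (mem_insert_self a s), ih fun i hi => h i (mem_insert_of_mem hi)]
    ring

theorem Fintype.exists_perm_of_map_univ_eq {ι α : Type*} [Fintype ι] {f g : ι → α}
    (h : univ.val.map f = univ.val.map g) : ∃ σ : Equiv.Perm ι, ∀ i, g i = f (σ i) := by
  classical
  have hfiber (c : α) : Fintype.card {i // g i = c} = Fintype.card {i // f i = c} := by
    have := congrArg (Multiset.count c) h
    simp only [Multiset.count_map, ← Finset.filter_val, Finset.card_val] at this
    simpa [Fintype.card_subtype, eq_comm] using this.symm
  exact ⟨Equiv.ofFiberEquiv fun c => Fintype.equivOfCardEq (hfiber c),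
    fun i => (Equiv.ofFiberEquiv_map _ i).symm⟩

namespace MomentProblem

section Polynomial

open Polynomial

variable {R ι : Type*} [CommRing R] [Fintype ι]

/-- The paper's normalised polynomial with reciprocal roots `x j`. -/
noncomputable def recipPoly (x : ι → R) : R[X] := ∏ j, (1 - C (x j) * X)

theorem coeff_zero_recipPoly (x : ι → R) : (recipPoly x).coeff 0 = 1 := by
  simp [recipPoly, coeff_zero_eq_eval_zero, eval_prod]

theorem recipPoly_ne_zero [Nontrivial R] (x : ι → R) : recipPoly x ≠ 0 := fun h => by
  simpa [h] using coeff_zero_recipPoly x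

theorem natDegree_recipPoly_le (x : ι → R) : (recipPoly x).natDegree ≤ Fintype.card ι := by
  refine (natDegree_prod_le _ _).trans ?_
  refine (sum_le_card_nsmul _ _ 1 fun j _ => ?_).trans (by simp)
  refine (natDegree_sub_le _ _).trans ?_
  simpa using (natDegree_C_mul_le _ _).trans natDegree_X_le

theorem reflect_prod_X_sub_C {κ : Type*} (s : Finset κ) (x : κ → R) :
    (∏ j ∈ s, (X - C (x j))).reflect #s = ∏ j ∈ s, (1 - C (x j) * X) := by
  classical
  induction s using Finset.induction_on with
  | empty => simp
  | insert a s ha ih =>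
    rw [card_insert_of_notMem ha, prod_insert ha, prod_insert ha, add_comm,
      reflect_mul _ _ (natDegree_X_sub_C_le (x a)) ((natDegree_prod_le _ _).trans
        ((sum_le_card_nsmul _ _ 1 fun j _ => natDegree_X_sub_C_le _).trans (by simp))), ih]
    simp [reflect_sub]

theorem exists_perm_of_recipPoly_eq [IsDomain R] {x x' : ι → R}
    (h : recipPoly x = recipPoly x') : ∃ σ : Equiv.Perm ι, ∀ j, x' j = x (σ j) := by
  have hreflect (x : ι → R) :
      (∏ j, (X - C (x j))).reflect (Fintype.card ι) = recipPoly x := by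
    rw [← card_univ]
    exact reflect_prod_X_sub_C univ x
  have hroots (x : ι → R) : (∏ j, (X - C (x j))).roots = univ.val.map x := by
    have : ∏ j, (X - C (x j)) = ((univ.val.map x).map fun a => X - C a).prod := by
      rw [Multiset.map_map]
      rfl
    rw [this, roots_multiset_prod_X_sub_C]
  refine Fintype.exists_perm_of_map_univ_eq ?_
  rw [← hroots, ← hroots, ← reflect_reflect (N := Fintype.card ι) (p := ∏ j, (X - C (x j))),
    hreflect, h, ← hreflect, reflect_reflect]

theorem eq_of_isCoprime_of_mul_eq_mul {K : Type*} [Field K] {p q p' q' : K[X]}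
    (hpq : IsCoprime p q) (hpq' : IsCoprime p' q') (h : q * p' = q' * p)
    (hp : p.coeff 0 = 1) (hp' : p'.coeff 0 = 1) : p = p' ∧ q = q' := by
  have hdvd : p ∣ p' := hpq.dvd_of_dvd_mul_left ⟨q', by rw [h, mul_comm]⟩
  have hdvd' : p' ∣ p := hpq'.dvd_of_dvd_mul_left ⟨q, by rw [← h, mul_comm]⟩
  obtain ⟨u, hu⟩ := associated_of_dvd_dvd hdvd hdvd'
  obtain ⟨c, -, hc⟩ := Polynomial.isUnit_iff.mp u.isUnit
  rw [← hc] at hu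
  have hc1 : c = 1 := by simpa [hp, hp'] using congrArg (coeff · 0) hu
  rw [hc1, map_one, mul_one] at hu
  subst hu
  refine ⟨rfl, mul_right_cancel₀ (fun h0 => ?_) h⟩
  simp [h0] at hp

end Polynomial

open PowerSeries

section PowerSeries

variable {R ι κ : Type*} [CommRing R] [Fintype ι] [Fintype κ]

noncomputable def eulerDeriv : Derivation R R⟦X⟧ R⟦X⟧ := (X : R⟦X⟧) • derivative R

theorem coeff_eulerDeriv (f : R⟦X⟧) (k : ℕ) : coeff k (eulerDeriv f) = k * coeff k f := by
  rcases k with _ | k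
  · simp [eulerDeriv, Derivation.smul_apply]
  · simp [eulerDeriv, Derivation.smul_apply, coeff_succ_X_mul, coeff_derivative, mul_comm]

theorem eulerDeriv_C_mul_X (z : R) : eulerDeriv (C z * X) = C z * X := by
  simp [eulerDeriv, Derivation.smul_apply, mul_comm]

noncomputable def geom (z : R) : R⟦X⟧ := mk (z ^ ·)

theorem one_sub_C_mul_X_mul_geom (z : R) : (1 - C z * X) * geom z = 1 := by
  have : geom z = rescale z (mk 1) := by ext; simp [geom, coeff_rescale]
  rw [this, ← rescale_X, ← map_one (rescale z), ← map_sub, ← map_mul, mul_comm,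
    mk_one_mul_one_sub_eq_one]

theorem eulerDeriv_geom (z : R) : eulerDeriv (geom z) = C z * X * geom z * geom z := by
  have hinv := one_sub_C_mul_X_mul_geom z
  have hderiv := congrArg eulerDeriv hinv
  rw [Derivation.leibniz, Derivation.map_one_eq_zero, map_sub, Derivation.map_one_eq_zero,
    eulerDeriv_C_mul_X, smul_eq_mul, smul_eq_mul] at hderiv
  linear_combination (-eulerDeriv (geom z)) * hinv + geom z * hderiv

theorem coeff_C_mul_X_mul_geom (z : R) (k : ℕ) :
    coeff k (C z * X * geom z) = if k = 0 then 0 else z ^ k := by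
  rw [mul_comm (C z), mul_assoc]
  rcases k with _ | k
  · simp
  · simp [coeff_succ_X_mul, geom, pow_succ, mul_comm]

@[simp] theorem coe_recipPoly (x : ι → R) :
    (recipPoly x : R⟦X⟧) = ∏ j, (1 - C (x j) * X) := by
  rw [recipPoly, ← Polynomial.coeToPowerSeries.ringHom_apply, map_prod]
  simp [Polynomial.coeToPowerSeries.ringHom_apply]

/-- The series `∏ᵢ (1 - y i X) / ∏ⱼ (1 - x j X)`. -/
noncomputable def genFun (x : ι → R) (y : κ → R) : R⟦X⟧ := recipPoly y * ∏ j, geom (x j)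

theorem genFun_mul_recipPoly (x : ι → R) (y : κ → R) :
    genFun x y * recipPoly x = recipPoly y := by
  simp only [genFun, coe_recipPoly]
  rw [mul_assoc, ← prod_mul_distrib]
  simp [mul_comm (geom _), one_sub_C_mul_X_mul_geom]

noncomputable def powerSumSeries (x : ι → R) (y : κ → R) : R⟦X⟧ :=
  ∑ j, C (x j) * X * geom (x j) - ∑ i, C (y i) * X * geom (y i)

theorem coeff_powerSumSeries (x : ι → R) (y : κ → R) (k : ℕ) :
    coeff k (powerSumSeries x y) = if k = 0 then 0 else ∑ j, x j ^ k - ∑ i, y i ^ k := by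
  split_ifs with hk <;> simp [powerSumSeries, coeff_C_mul_X_mul_geom, hk]

theorem eulerDeriv_genFun (x : ι → R) (y : κ → R) :
    eulerDeriv (genFun x y) = powerSumSeries x y * genFun x y := by
  have hy : ∀ i ∈ univ, eulerDeriv (1 - C (y i) * X) =
      -(C (y i) * X * geom (y i)) * (1 - C (y i) * X) := fun i _ => by
    rw [map_sub, Derivation.map_one_eq_zero, eulerDeriv_C_mul_X]
    linear_combination (C (y i) * X) * one_sub_C_mul_X_mul_geom (y i)
  have hx : ∀ j ∈ univ, eulerDeriv (geom (x j)) = C (x j) * X * geom (x j) * geom (x j) :=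
    fun j _ => eulerDeriv_geom (x j)
  rw [genFun, coe_recipPoly, Derivation.leibniz, smul_eq_mul, smul_eq_mul,
    Derivation.map_prod_eq_sum_mul_prod _ _ hy, Derivation.map_prod_eq_sum_mul_prod _ _ hx,
    powerSumSeries, sum_neg_distrib]
  ring

theorem coeff_genFun_rec (x : ι → R) (y : κ → R) (k : ℕ) :
    k * coeff k (genFun x y) =
      ∑ j ∈ Icc 1 k, (∑ t, x t ^ j - ∑ t, y t ^ j) * coeff (k - j) (genFun x y) := by
  rw [← coeff_eulerDeriv, eulerDeriv_genFun, coeff_mul,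
    Nat.sum_antidiagonal_eq_sum_range_succ fun i j => coeff i (powerSumSeries x y) * coeff j _]
  have hsub : Icc 1 k ⊆ range (k + 1) := fun j hj => by simp at hj ⊢; omega
  rw [← sum_subset hsub fun j hj hj' => ?_]
  · refine sum_congr rfl fun j hj => ?_
    rw [coeff_powerSumSeries, if_neg (by simp at hj; omega)]
  · obtain rfl : j = 0 := by simp at hj hj'; omega
    simp [coeff_powerSumSeries]

theorem mul_eq_mul_of_coeff_eq {N : ℕ} {f g : R⟦X⟧} {p q p' q' : Polynomial R}
    (hfg : ∀ k ≤ N, coeff k f = coeff k g) (hf : f * p = q) (hg : g * p' = q')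
    (hd : (q * p').natDegree ≤ N) (hd' : (q' * p).natDegree ≤ N) : q * p' = q' * p := by
  have htrunc : trunc (N + 1) f = trunc (N + 1) g := by
    ext k
    simp only [coeff_trunc]
    split_ifs with hk
    · exact hfg k (by omega)
    · rfl
  have e : ((q * p' : Polynomial R) : R⟦X⟧) = f * (p * p') := by
    rw [Polynomial.coe_mul, ← hf]
    ring
  have e' : ((q' * p : Polynomial R) : R⟦X⟧) = g * (p * p') := by
    rw [Polynomial.coe_mul, ← hg]
    ring
  rw [← trunc_coe_eq_self (Nat.lt_succ_of_le hd), ← trunc_coe_eq_self (Nat.lt_succ_of_le hd'),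
    e, e', ← trunc_trunc_mul, htrunc, trunc_trunc_mul]

end PowerSeries

section Field

variable {K ι κ : Type*} [Field K] [Fintype ι] [Fintype κ]

theorem eq_coeff_genFun_of_rec [CharZero K] {N : ℕ} {m : ℕ → K} {a : ℤ → K} (ha0 : a 0 = 1)
    (harec : ∀ k : ℕ, 1 ≤ k → k ≤ N → (k : K) * a k = ∑ j ∈ Icc 1 k, m j * a ((k : ℤ) - j))
    {x : ι → K} {y : κ → K}
    (hsol : ∀ k : ℕ, 1 ≤ k → k ≤ N → m k = ∑ j, x j ^ k - ∑ i, y i ^ k) :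
    ∀ k ≤ N, a k = coeff k (genFun x y) := by
  intro k
  induction k using Nat.strong_induction_on with
  | _ k ih =>
    intro hkN
    rcases Nat.eq_zero_or_pos k with rfl | hk
    · simpa [genFun, coeff_zero_eq_constantCoeff_apply, geom] using ha0
    · refine mul_left_cancel₀ (Nat.cast_ne_zero.mpr hk.ne') ?_
      rw [harec k hk hkN, coeff_genFun_rec]
      refine sum_congr rfl fun j hj => ?_
      rw [mem_Icc] at hj
      rw [hsol j hj.1 (by omega), ← ih (k - j) (by omega) (by omega), Nat.cast_sub hj.2]

/-- The matrix `A_1`. -/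
def hankel (nx ny : ℕ) (a : ℤ → K) : Matrix (Fin nx) (Fin nx) K :=
  Matrix.of fun i j => a ((ny : ℤ) + i - j)

theorem det_hankel_eq_zero {nx ny : ℕ} {a : ℤ → K} (haneg : ∀ k : ℤ, k < 0 → a k = 0)
    {f : K⟦X⟧} (haf : ∀ k ≤ nx + ny, a k = coeff k f) {p q : Polynomial K} (hp : p ≠ 0)
    (hpd : p.natDegree < nx) (hqd : q.natDegree < ny) (hfpq : f * p = q) :
    (hankel nx ny a).det = 0 := by
  rw [← Matrix.exists_mulVec_eq_zero_iff]
  refine ⟨fun j => p.coeff j, fun h => hp ?_, funext fun i => ?_⟩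
  · exact Polynomial.leadingCoeff_eq_zero.mp (congrFun h ⟨_, hpd⟩)
  -- both sides of `(A_1 p)_i = [X^(n_y + i)] (p f)` are sums of `g t` over `t < n_x + n_y`
  set g : ℕ → K := fun t => p.coeff t * a ((ny : ℤ) + (i : ℕ) - t)
  have hrow : (hankel nx ny a).mulVec (fun j => p.coeff j) i = ∑ t ∈ range (nx + ny), g t := by
    rw [Matrix.mulVec, dotProduct,
      ← sum_subset (range_subset_range.mpr (by omega : nx ≤ nx + ny)) fun t _ ht => by
        simp [g, Polynomial.coeff_eq_zero_of_natDegree_lt (hpd.trans_le (by simpa using ht))]]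
    simp only [hankel, Matrix.of_apply, g, mul_comm (a _)]
    exact Fin.sum_univ_eq_sum_range (fun t => p.coeff t * a ((ny : ℤ) + (i : ℕ) - t)) nx
  have hcoeff : coeff (ny + i) ((p : K⟦X⟧) * f) = ∑ t ∈ range (nx + ny), g t := by
    rw [coeff_mul,
      Nat.sum_antidiagonal_eq_sum_range_succ fun s t => coeff s (p : K⟦X⟧) * coeff t f,
      ← sum_subset (range_subset_range.mpr (by omega : ny + (i : ℕ) + 1 ≤ nx + ny))
        fun t _ ht => by
          rw [mem_range] at ht
          simp only [g]
          rw [haneg _ (by omega), mul_zero]]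
    refine sum_congr rfl fun t ht => ?_
    rw [mem_range] at ht
    rw [Polynomial.coeff_coe, ← haf _ (by omega), Nat.cast_sub (by omega)]
    push_cast
    rfl
  rw [hrow, ← hcoeff, mul_comm, hfpq, Polynomial.coeff_coe,
    Polynomial.coeff_eq_zero_of_natDegree_lt (by omega)]
  rfl

theorem isCoprime_of_det_hankel_ne_zero {nx ny : ℕ} {a : ℤ → K}
    (haneg : ∀ k : ℤ, k < 0 → a k = 0) {f : K⟦X⟧} (haf : ∀ k ≤ nx + ny, a k = coeff k f)
    {p q : Polynomial K} (hp : p ≠ 0) (hq : q ≠ 0) (hpd : p.natDegree ≤ nx)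
    (hqd : q.natDegree ≤ ny) (hfpq : f * p = q) (hdet : (hankel nx ny a).det ≠ 0) :
    IsCoprime p q := by
  refine EuclideanDomain.isCoprime_of_dvd (fun h => hp h.1) ?_
  rintro d hd hd0 ⟨p₁, rfl⟩ ⟨q₁, rfl⟩
  have hdeg : 0 < d.natDegree := Polynomial.natDegree_pos_iff_degree_pos.mpr
    (Polynomial.degree_pos_of_ne_zero_of_nonunit hd0 hd)
  have hp₁ : p₁ ≠ 0 := right_ne_zero_of_mul hp
  have hq₁ : q₁ ≠ 0 := right_ne_zero_of_mul hq
  rw [Polynomial.natDegree_mul hd0 hp₁] at hpd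
  rw [Polynomial.natDegree_mul hd0 hq₁] at hqd
  refine hdet (det_hankel_eq_zero (q := q₁) haneg haf hp₁ (by omega) (by omega) ?_)
  refine mul_left_cancel₀ (fun h => hd0 (Polynomial.coe_eq_zero_iff.mp h)) ?_
  push_cast at hfpq
  linear_combination hfpq

end Field

end MomentProblem

open MomentProblem in
theorem stmt_10_general (nx ny : ℕ) (m : ℕ → ℝ) (a : ℤ → ℝ)
    (ha0 : a 0 = 1) (haneg : ∀ k : ℤ, k < 0 → a k = 0)
    (harec : ∀ k : ℕ, 1 ≤ k → k ≤ nx + ny →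
      (k : ℝ) * a k = ∑ j ∈ Icc 1 k, m j * a ((k : ℤ) - j))
    (hA1 : (Matrix.of fun (i j : Fin nx) => a ((ny : ℤ) + i - j)).det ≠ 0)
    (x x' : Fin nx → ℝ) (y y' : Fin ny → ℝ)
    (hsol : ∀ k : ℕ, 1 ≤ k → k ≤ nx + ny → m k = ∑ j, x j ^ k - ∑ i, y i ^ k)
    (hsol' : ∀ k : ℕ, 1 ≤ k → k ≤ nx + ny → m k = ∑ j, x' j ^ k - ∑ i, y' i ^ k) :
    (∃ σ : Equiv.Perm (Fin nx), ∀ j, x' j = x (σ j)) ∧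
      (∃ τ : Equiv.Perm (Fin ny), ∀ i, y' i = y (τ i)) := by
  have hF := eq_coeff_genFun_of_rec ha0 harec hsol
  have hF' := eq_coeff_genFun_of_rec ha0 harec hsol'
  have hcoprime (u : Fin nx → ℝ) (v : Fin ny → ℝ)
      (h : ∀ k ≤ nx + ny, a k = PowerSeries.coeff k (genFun u v)) :
      IsCoprime (recipPoly u) (recipPoly v) :=
    isCoprime_of_det_hankel_ne_zero haneg h (recipPoly_ne_zero u) (recipPoly_ne_zero v)
      (by simpa using natDegree_recipPoly_le u) (by simpa using natDegree_recipPoly_le v)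
      (genFun_mul_recipPoly u v) hA1
  have hdeg (u : Fin nx → ℝ) (v : Fin ny → ℝ) : (recipPoly v * recipPoly u).natDegree ≤ nx + ny :=
    Polynomial.natDegree_mul_le.trans <| by
      simpa [add_comm] using add_le_add (natDegree_recipPoly_le v) (natDegree_recipPoly_le u)
  have hcross : recipPoly y * recipPoly x' = recipPoly y' * recipPoly x :=
    mul_eq_mul_of_coeff_eq (fun k hk => (hF k hk).symm.trans (hF' k hk))
      (genFun_mul_recipPoly x y) (genFun_mul_recipPoly x' y') (hdeg x' y) (hdeg x y')
  obtain ⟨hx, hy⟩ := eq_of_isCoprime_of_mul_eq_mul (hcoprime x y hF) (hcoprime x' y' hF') hcross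
    (coeff_zero_recipPoly x) (coeff_zero_recipPoly x')
  exact ⟨exists_perm_of_recipPoly_eq hx, exists_perm_of_recipPoly_eq hy⟩

/-- Uniqueness: if the Hankel matrix `A_1` built from the exponential transform of
the moments is nonsingular, then any two solutions of the moment problem
`m_k = ∑_{j=1}^{n_x} x_j^k - ∑_{j=1}^{n_y} y_j^k` (`k = 1,…,K = n_x+n_y`) coincide
up to a reordering of the branch values. -/
theorem stmt_10 (nx ny : ℕ) (hnx : 0 < nx) (hny : 0 < ny) (m : ℕ → ℝ) (a : ℤ → ℝ)
    (ha0 : a 0 = 1) (haneg : ∀ k : ℤ, k < 0 → a k = 0)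
    (harec : ∀ k : ℕ, 1 ≤ k → k ≤ nx + ny →
      (k : ℝ) * a k = ∑ j ∈ Icc 1 k, m j * a ((k : ℤ) - j))
    (hA1 : (Matrix.of fun (i j : Fin nx) => a ((ny : ℤ) + i - j)).det ≠ 0)
    (x x' : Fin nx → ℝ) (y y' : Fin ny → ℝ)
    (hsol : ∀ k : ℕ, 1 ≤ k → k ≤ nx + ny → m k = ∑ j, x j ^ k - ∑ i, y i ^ k)
    (hsol' : ∀ k : ℕ, 1 ≤ k → k ≤ nx + ny → m k = ∑ j, x' j ^ k - ∑ i, y' i ^ k) :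
    (∃ σ : Equiv.Perm (Fin nx), ∀ j, x' j = x (σ j)) ∧
      (∃ τ : Equiv.Perm (Fin ny), ∀ i, y' i = y (τ i)) :=
  stmt_10_general nx ny m a ha0 haneg harec hA1 x x' y y' hsol hsol'
end

section
/- Any two solutions of the moment problem yield the same higher moments: if {x_j} \cup {y_j} and {x'_j} \cup {y'_j} both solve m_k = \sum_{j=1}^{n_x} x_j^k - \sum_{j=1}^{n_y} y_j^k for k = 1,...,K = n_x+n_y, then \sum_j x_j^k - \sum_j y_j^k = \sum_j (x'_j)^k - \sum_j (y'_j)^k for all k > K as well. -/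
/-!
Moving the `y'` to the left and the `y` to the right, `x ∪ y'` and `x' ∪ y` are two families
of `K` reals whose power sums `p_1, …, p_K` agree. Newton's identities then force their
elementary symmetric functions to agree (they vanish beyond degree `K`), and conversely express
every `p_k` through the `e_i` and lower `p_j`, so all power sums agree.
-/

open Finset MvPolynomial

namespace MvPolynomial

variable {σ R : Type*} [Fintype σ]

theorem esymm_eq_zero_of_card_lt [CommSemiring R] {k : ℕ} (hk : Fintype.card σ < k) :
    esymm σ R k = 0 := by
  rw [esymm, powersetCard_eq_empty.mpr (by simpa using hk), sum_empty]

section CommRing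

variable [CommRing R]

theorem eval_psum (a : σ → R) (k : ℕ) : eval a (psum σ R k) = ∑ i, a i ^ k := by
  simp [psum]

theorem eval_psum_eq_mul_eval_esymm_sub_sum (a : σ → R) {k : ℕ} (hk : 0 < k) :
    eval a (psum σ R k) = (-1) ^ (k + 1) * k * eval a (esymm σ R k) -
      ∑ t ∈ antidiagonal k with t.1 ∈ Set.Ioo 0 k,
        (-1) ^ t.1 * eval a (esymm σ R t.1) * eval a (psum σ R t.2) := by
  simpa [map_sum] using congrArg (eval a) (psum_eq_mul_esymm_sub_sum σ R k hk)

theorem sum_esymm_mul_psum_congr (a b : σ → R) {k : ℕ}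
    (he : ∀ i, 0 < i → i < k → eval a (esymm σ R i) = eval b (esymm σ R i))
    (hp : ∀ j, 0 < j → j < k → eval a (psum σ R j) = eval b (psum σ R j)) :
    ∑ t ∈ antidiagonal k with t.1 ∈ Set.Ioo 0 k,
        (-1) ^ t.1 * eval a (esymm σ R t.1) * eval a (psum σ R t.2) =
      ∑ t ∈ antidiagonal k with t.1 ∈ Set.Ioo 0 k,
        (-1) ^ t.1 * eval b (esymm σ R t.1) * eval b (psum σ R t.2) := by
  refine sum_congr rfl fun t ht => ?_
  obtain ⟨hsum, hpos, hlt⟩ : t.1 + t.2 = k ∧ 0 < t.1 ∧ t.1 < k := by simpa using ht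
  rw [he t.1 hpos hlt, hp t.2 (by omega) (by omega)]

end CommRing

variable [Field R] [CharZero R] (a b : σ → R)

theorem eval_esymm_eq_of_eval_psum_eq
    (h : ∀ k, 0 < k → k ≤ Fintype.card σ → eval a (psum σ R k) = eval b (psum σ R k))
    (k : ℕ) : eval a (esymm σ R k) = eval b (esymm σ R k) := by
  induction k using Nat.strong_induction_on with
  | _ k ih =>
  rcases Nat.eq_zero_or_pos k with rfl | hk
  · simp [esymm_zero]
  rcases lt_or_ge (Fintype.card σ) k with hcard | hcard
  · simp [esymm_eq_zero_of_card_lt hcard]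
  have htail := sum_esymm_mul_psum_congr a b (fun i _ hi => ih i hi)
    (fun j hj hjk => h j hj (by omega))
  have hc : (-1 : R) ^ (k + 1) * k ≠ 0 :=
    mul_ne_zero (pow_ne_zero _ (neg_ne_zero.2 one_ne_zero)) (Nat.cast_ne_zero.2 hk.ne')
  refine mul_left_cancel₀ hc ?_
  linear_combination h k hk hcard - eval_psum_eq_mul_eval_esymm_sub_sum a hk
    + eval_psum_eq_mul_eval_esymm_sub_sum b hk + htail

theorem sum_pow_eq_of_forall_le_card
    (h : ∀ k, 0 < k → k ≤ Fintype.card σ → ∑ i, a i ^ k = ∑ i, b i ^ k)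
    {k : ℕ} (hk : 0 < k) : ∑ i, a i ^ k = ∑ i, b i ^ k := by
  simp only [← eval_psum] at h ⊢
  have he := eval_esymm_eq_of_eval_psum_eq a b h
  induction k using Nat.strong_induction_on with
  | _ k ih =>
  rcases le_or_gt k (Fintype.card σ) with hcard | hcard
  · exact h k hk hcard
  rw [eval_psum_eq_mul_eval_esymm_sub_sum a hk, eval_psum_eq_mul_eval_esymm_sub_sum b hk, he k,
    sum_esymm_mul_psum_congr a b (fun i _ _ => he i) (fun j hj hjk => ih j hjk hj)]

end MvPolynomial

theorem stmt_11_general (nx ny : ℕ)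
    (x x' : Fin nx → ℝ) (y y' : Fin ny → ℝ)
    (h : ∀ k : ℕ, 1 ≤ k → k ≤ nx + ny →
      ∑ j, x j ^ k - ∑ i, y i ^ k = ∑ j, x' j ^ k - ∑ i, y' i ^ k) :
    ∀ k : ℕ, nx + ny < k →
      ∑ j, x j ^ k - ∑ i, y i ^ k = ∑ j, x' j ^ k - ∑ i, y' i ^ k := by
  intro k hk
  have hmerged := sum_pow_eq_of_forall_le_card (Sum.elim x y') (Sum.elim x' y)
    (fun m hm hmK => by
      simp only [Fintype.sum_sum_type, Sum.elim_inl, Sum.elim_inr]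
      linarith [h m hm (by simpa using hmK)])
    (by omega : 0 < k)
  simp only [Fintype.sum_sum_type, Sum.elim_inl, Sum.elim_inr] at hmerged
  linarith

/-- Any two solutions of the moment problem have the same higher moments: if the
signed power sums of `{x_j} ∪ {y_j}` and `{x'_j} ∪ {y'_j}` agree for
`k = 1,…,K = n_x+n_y`, then they agree for all `k > K` as well. -/
theorem stmt_11 (nx ny : ℕ) (hnx : 0 < nx) (hny : 0 < ny)
    (x x' : Fin nx → ℝ) (y y' : Fin ny → ℝ)
    (h : ∀ k : ℕ, 1 ≤ k → k ≤ nx + ny →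
      ∑ j, x j ^ k - ∑ i, y i ^ k = ∑ j, x' j ^ k - ∑ i, y' i ^ k) :
    ∀ k : ℕ, nx + ny < k →
      ∑ j, x j ^ k - ∑ i, y i ^ k = ∑ j, x' j ^ k - ∑ i, y' i ^ k :=
  stmt_11_general nx ny x x' y y' h
end

section
/- With distinct nonzero x_j, weights w_j = q_r(x_j)/p_r'(x_j), V the n_x \times n_x Vandermonde matrix V_{ij} = x_j^{i-1}, W = diag(w_1,...,w_{n_x}), X = diag(x_1,...,x_{n_x}), and R the reversal (anti-identity) matrix, the Hankel matrices A_1 and A_0 built from the a_k sequence satisfy A_1 R = V W V^T and A_0 R = V W X V^T. -/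
open Finset Polynomial
open scoped PowerSeries

/-!
With `P = ∏ (z - x_j)` and `Q = ∏ (z - y_i)`, the series `q/p` equals
`X^(n_y - n_x) Q(1/X) / P(1/X)`. Partial fractions give `Q/P = S + ∑ w_k / (z - x_k)` with `S` a
polynomial, and `1/(1/X - x_k) = ∑_m x_k^m X^(m+1)`; hence for `m ≥ 0` the coefficient of
`X^(n_y + 1 - n_x + m)` in `q/p` is the moment `∑ w_k x_k^m`, and these moments are the entries of
`V W Vᵀ` and `V W X Vᵀ`.

After reversal, the partial fraction decomposition becomes the polynomial identity
`X^d q - X^e G = p h` with `d + n_y + 1 = e + n_x`, `deg h < e` and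
`G = partialFractionNumerator x w`, so that `G/p = ∑ w_k / (1 - x_k X)`;
`p` divides the left side because the left side vanishes at every `1/x_k`.
-/

theorem Polynomial.degree_lt_of_degree_mul_lt {R : Type*} [Semiring R] [NoZeroDivisors R]
    {p h : R[X]} (hp : p ≠ 0) {e : ℕ} (hph : (p * h).degree < e + p.degree) : h.degree < e := by
  rw [degree_mul, add_comm] at hph
  exact (WithBot.add_lt_add_iff_right (degree_ne_bot.2 hp)).1 hph

namespace PowerSeries

variable {K : Type*} [Field K]

theorem coeff_inv_one_sub_C_mul_X (a : K) (n : ℕ) :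
    coeff n ((1 - C a * X : K⟦X⟧)⁻¹) = a ^ n := by
  have : (1 - C a * X : K⟦X⟧)⁻¹ = rescale a (mk 1) := by
    rw [PowerSeries.inv_eq_iff_mul_eq_one (by simp), ← rescale_X, ← map_one (rescale a),
      ← map_sub, ← map_mul, mk_one_mul_one_sub_eq_one, map_one]
  simp [this, coeff_rescale]

theorem coeff_X_pow_mul_mul_inv_of_sub_eq {f g p : K⟦X⟧} {h : K[X]} (hp : constantCoeff p ≠ 0)
    {d e : ℕ} (hh : h.degree < e) (hfg : X ^ d * f - X ^ e * g = p * (h : K⟦X⟧)) (m : ℕ) :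
    coeff (e + m) (X ^ d * (f * p⁻¹)) = coeff m (g * p⁻¹) := by
  have hsplit : X ^ d * (f * p⁻¹) = (h : K⟦X⟧) + X ^ e * (g * p⁻¹) := by
    linear_combination p⁻¹ * hfg + (h : K⟦X⟧) * PowerSeries.mul_inv_cancel p hp
  rw [hsplit, map_add, Polynomial.coeff_coe,
    coeff_eq_zero_of_degree_lt (hh.trans_le (by exact_mod_cast e.le_add_right m)), zero_add,
    add_comm, coeff_X_pow_mul]

theorem coeff_X_pow_mul_eq_of_zero_extension {R : Type*} [Semiring R] {f : R⟦X⟧} {a : ℤ → R}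
    (haneg : ∀ n : ℤ, n < 0 → a n = 0) (ha : ∀ n : ℕ, a n = coeff n f) (d n : ℕ) :
    coeff n (X ^ d * f) = a (n - d) := by
  rw [coeff_X_pow_mul']
  split_ifs with hdn
  · rw [← Nat.cast_sub hdn, ha]
  · rw [haneg _ (by omega)]

end PowerSeries

namespace Matrix

theorem mul_exchange_apply {R : Type*} [NonAssocSemiring R] {n : ℕ}
    {M P : Matrix (Fin n) (Fin n) R} (hP : ∀ i j, P i j = if (i : ℕ) + j = n - 1 then 1 else 0)
    (i j : Fin n) : (M * P) i j = M i j.rev := by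
  rw [mul_apply, sum_eq_single j.rev]
  · rw [hP, if_pos (by rw [Fin.val_rev]; omega), mul_one]
  · intro k _ hk
    rw [hP, if_neg fun h => hk (Fin.ext (by rw [Fin.val_rev]; omega)), mul_zero]
  · simp

theorem vandermonde_transpose_mul_diagonal_mul_vandermonde {R : Type*} [CommRing R]
    {n : ℕ} (v u : Fin n → R) (i j : Fin n) :
    ((vandermonde v)ᵀ * diagonal u * vandermonde v) i j = ∑ k, u k * v k ^ ((i : ℕ) + j) := by
  refine (mul_apply ..).trans (sum_congr rfl fun k _ => ?_)
  rw [mul_diagonal, transpose_apply, vandermonde_apply, vandermonde_apply, pow_add]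
  ring

end Matrix

namespace Lagrange

variable {K ι : Type*} [Field K]

noncomputable def reverseNodal (s : Finset ι) (v : ι → K) : K[X] :=
  ∏ i ∈ s, (1 - C (v i) * X)

theorem eval_inv_reverseNodal (s : Finset ι) (v : ι → K) {c : K} (hc : c ≠ 0) :
    (reverseNodal s v).eval c⁻¹ = c⁻¹ ^ #s * (nodal s v).eval c := by
  rw [reverseNodal, eval_nodal, eval_prod, ← prod_const, ← prod_mul_distrib]
  refine prod_congr rfl fun i _ => ?_
  simp only [eval_sub, eval_one, eval_mul, eval_C, eval_X]
  field_simp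

theorem reverseNodal_eq_C_mul_nodal_inv {s : Finset ι} {v : ι → K}
    (hv : ∀ i ∈ s, v i ≠ 0) :
    reverseNodal s v = C (∏ i ∈ s, -v i) * nodal s (fun i => (v i)⁻¹) := by
  rw [nodal, map_prod, ← prod_mul_distrib]
  refine prod_congr rfl fun i hi => ?_
  rw [mul_sub, ← C_mul, neg_mul, mul_inv_cancel₀ (hv i hi)]
  simp only [map_neg, map_one]
  ring

theorem degree_reverseNodal {s : Finset ι} {v : ι → K} (hv : ∀ i ∈ s, v i ≠ 0) :
    (reverseNodal s v).degree = #s := by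
  rw [reverseNodal_eq_C_mul_nodal_inv hv,
    degree_C_mul (prod_ne_zero_iff.2 fun i hi => neg_ne_zero.2 (hv i hi)), degree_nodal]

theorem degree_reverseNodal_le (s : Finset ι) (v : ι → K) : (reverseNodal s v).degree ≤ #s :=
  degree_le_of_natDegree_le <| (natDegree_prod_le _ _).trans <|
    (sum_le_card_nsmul _ _ 1 fun i _ => by compute_degree).trans_eq (by simp)

theorem reverseNodal_dvd {s : Finset ι} {v : ι → K} (hinj : Function.Injective v)
    (hv : ∀ i ∈ s, v i ≠ 0) {f : K[X]} (hf : ∀ i ∈ s, f.eval (v i)⁻¹ = 0) :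
    reverseNodal s v ∣ f := by
  rw [reverseNodal_eq_C_mul_nodal_inv hv,
    C_mul_dvd (prod_ne_zero_iff.2 fun i hi => neg_ne_zero.2 (hv i hi))]
  exact Finset.prod_dvd_of_coprime
    ((pairwise_coprime_X_sub_C (inv_injective.comp hinj)).set_pairwise _)
    fun i hi => dvd_iff_isRoot.2 (hf i hi)

theorem coeff_zero_reverseNodal (s : Finset ι) (v : ι → K) :
    (reverseNodal s v).coeff 0 = 1 := by
  simp [coeff_zero_eq_eval_zero, reverseNodal, eval_prod]
variable [Fintype ι] [DecidableEq ι]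

noncomputable def partialFractionNumerator (v w : ι → K) : K[X] :=
  ∑ k, C (w k) * reverseNodal (univ.erase k) v

theorem coeff_partialFractionNumerator_mul_inv (v w : ι → K) (m : ℕ) :
    PowerSeries.coeff m ((partialFractionNumerator v w : K⟦X⟧) *
      (reverseNodal univ v : K⟦X⟧)⁻¹) = ∑ k, w k * v k ^ m := by
  have hsplit : ∀ k, (reverseNodal (univ.erase k) v : K⟦X⟧) *
      (reverseNodal univ v : K⟦X⟧)⁻¹ = (1 - PowerSeries.C (v k) * PowerSeries.X)⁻¹ := by
    intro k
    have hfactor : (reverseNodal univ v : K⟦X⟧) =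
        (1 - PowerSeries.C (v k) * PowerSeries.X) * (reverseNodal (univ.erase k) v : K⟦X⟧) := by
      rw [reverseNodal, ← mul_prod_erase univ _ (mem_univ k)]
      push_cast
      rfl
    rw [hfactor, PowerSeries.mul_inv_rev, ← mul_assoc,
      PowerSeries.mul_inv_cancel _ (by simp [coeff_zero_reverseNodal]), one_mul]
  rw [partialFractionNumerator, ← coeToPowerSeries.ringHom_apply, map_sum, sum_mul, map_sum]
  refine sum_congr rfl fun k _ => ?_
  rw [coeToPowerSeries.ringHom_apply, Polynomial.coe_mul, coe_C, mul_assoc, hsplit,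
    PowerSeries.coeff_C_mul, PowerSeries.coeff_inv_one_sub_C_mul_X]

theorem degree_partialFractionNumerator_lt (v w : ι → K) :
    (partialFractionNumerator v w).degree < Fintype.card ι := by
  rcases isEmpty_or_nonempty ι with hι | hι
  · simp [partialFractionNumerator]
  refine (degree_sum_le _ _).trans_lt <| (Finset.sup_lt_iff (WithBot.bot_lt_coe _)).2 fun k _ =>
    (smul_eq_C_mul (w k) ▸ degree_smul_le _ _).trans_lt <|
      (degree_reverseNodal_le _ _).trans_lt ?_
  rw [card_erase_of_mem (mem_univ k), card_univ]
  exact_mod_cast Nat.sub_lt Fintype.card_pos one_pos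

theorem eval_inv_partialFractionNumerator {v : ι → K} (w : ι → K) {k : ι} (hk : v k ≠ 0) :
    (partialFractionNumerator v w).eval (v k)⁻¹ =
      (v k)⁻¹ ^ (Fintype.card ι - 1) * (w k * (derivative (nodal univ v)).eval (v k)) := by
  rw [partialFractionNumerator, eval_finsetSum, sum_eq_single k, eval_mul, eval_C,
    eval_inv_reverseNodal _ _ hk, eval_nodal_derivative_eval_node_eq (mem_univ k),
    card_erase_of_mem (mem_univ k), card_univ, mul_left_comm]
  · intro j _ hjk
    rw [eval_mul, eval_inv_reverseNodal _ _ hk,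
      eval_nodal_at_node (mem_erase.2 ⟨fun h => hjk h.symm, mem_univ k⟩), mul_zero, mul_zero]
  · simp

variable {κ : Type*} [Fintype κ]

theorem reverseNodal_dvd_X_pow_mul_sub {v : ι → K} (hinj : Function.Injective v)
    (hv : ∀ k, v k ≠ 0) (u : κ → K) {w : ι → K}
    (hw : ∀ k, w k = (nodal univ u).eval (v k) / (derivative (nodal univ v)).eval (v k))
    {d e : ℕ} (hde : d + Fintype.card κ + 1 = e + Fintype.card ι) :
    reverseNodal univ v ∣ X ^ d * reverseNodal univ u - X ^ e * partialFractionNumerator v w := by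
  refine reverseNodal_dvd hinj (fun k _ => hv k) fun k _ => ?_
  have hderiv : (derivative (nodal univ v)).eval (v k) ≠ 0 := by
    rw [eval_nodal_derivative_eval_node_eq (mem_univ k)]
    exact eval_nodal_not_at_node fun j hj => hinj.ne (mem_erase.1 hj).1.symm
  have hexp : d + Fintype.card κ = e + (Fintype.card ι - 1) := by
    have : 0 < Fintype.card ι := Fintype.card_pos_iff.2 ⟨k⟩
    omega
  rw [eval_sub, eval_mul, eval_mul, eval_inv_partialFractionNumerator w (hv k), hw k,
    eval_inv_reverseNodal _ _ (hv k), card_univ, div_mul_cancel₀ _ hderiv]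
  simp only [eval_pow, eval_X, ← mul_assoc, ← pow_add, hexp, sub_self]

theorem degree_X_pow_mul_reverseNodal_sub_lt (u : κ → K) (v w : ι → K) {d e : ℕ}
    (hde : d + Fintype.card κ + 1 = e + Fintype.card ι) :
    (X ^ d * reverseNodal univ u - X ^ e * partialFractionNumerator v w).degree <
      (e : WithBot ℕ) + Fintype.card ι := by
  refine (degree_sub_le _ _).trans_lt (max_lt ?_ ?_)
  · rw [degree_mul, degree_X_pow]
    refine (add_le_add le_rfl
      ((degree_reverseNodal_le (univ : Finset κ) u).trans_eq (by rw [card_univ]))).trans_lt ?_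
    exact_mod_cast (by omega : d + Fintype.card κ < e + Fintype.card ι)
  · rw [degree_mul, degree_X_pow]
    exact (WithBot.add_lt_add_iff_left (WithBot.natCast_ne_bot e)).2
      (degree_partialFractionNumerator_lt v w)

theorem coeff_X_pow_mul_reverseNodal_mul_inv {v : ι → K} (hinj : Function.Injective v)
    (hv : ∀ k, v k ≠ 0) (u : κ → K) {w : ι → K}
    (hw : ∀ k, w k = (nodal univ u).eval (v k) / (derivative (nodal univ v)).eval (v k))
    {d e : ℕ} (hde : d + Fintype.card κ + 1 = e + Fintype.card ι) (m : ℕ) :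
    PowerSeries.coeff (e + m) (PowerSeries.X ^ d *
      ((reverseNodal univ u : K⟦X⟧) * (reverseNodal univ v : K⟦X⟧)⁻¹)) =
      ∑ k, w k * v k ^ m := by
  obtain ⟨h, hh⟩ := reverseNodal_dvd_X_pow_mul_sub hinj hv u hw hde
  have hp0 : reverseNodal univ v ≠ 0 := fun h0 => by
    simpa [h0] using coeff_zero_reverseNodal univ v
  have hpdeg : (reverseNodal univ v).degree = Fintype.card ι :=
    (degree_reverseNodal fun k _ => hv k).trans (by rw [card_univ])
  have hhdeg : h.degree < e := degree_lt_of_degree_mul_lt hp0 <| by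
    rw [← hh, hpdeg]
    exact degree_X_pow_mul_reverseNodal_sub_lt u v w hde
  have hh' := congrArg ((↑) : K[X] → K⟦X⟧) hh
  push_cast at hh'
  rw [PowerSeries.coeff_X_pow_mul_mul_inv_of_sub_eq (by simp [coeff_zero_reverseNodal]) hhdeg hh',
    coeff_partialFractionNumerator_mul_inv]

end Lagrange

/-- Factorization of the Hankel matrices: with distinct nonzero `x_j`, weights
`w_j = q_r(x_j)/p_r'(x_j)`, the Vandermonde matrix `V_{ij} = x_j^{i-1}`,
`W = diag(w)`, `X = diag(x)` and `R` the reversal matrix, the matrices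
`(A_1)_{ij} = a_{n_y+i-j}` and `(A_0)_{ij} = a_{n_y+1+i-j}` satisfy
`A_1 R = V W Vᵀ` and `A_0 R = V W X Vᵀ`. -/
theorem stmt_14 (nx ny : ℕ) (x : Fin nx → ℝ) (y : Fin ny → ℝ)
    (hxdist : Function.Injective x) (hx0 : ∀ j, x j ≠ 0)
    (a : ℤ → ℝ) (haneg : ∀ n : ℤ, n < 0 → a n = 0)
    (ha : ∀ n : ℕ, a n = PowerSeries.coeff n
      (((∏ i, (1 - C (y i) * X) : ℝ[X]) : PowerSeries ℝ) *
        ((∏ j, (1 - C (x j) * X) : ℝ[X]) : PowerSeries ℝ)⁻¹))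
    (w : Fin nx → ℝ)
    (hw : ∀ j, w j = (∏ i, (X - C (y i)) : ℝ[X]).eval (x j) /
        (derivative (∏ j', (X - C (x j')) : ℝ[X])).eval (x j))
    (A1 A0 V W R : Matrix (Fin nx) (Fin nx) ℝ)
    (hA1 : ∀ i j, A1 i j = a ((ny : ℤ) + i - j))
    (hA0 : ∀ i j, A0 i j = a ((ny : ℤ) + 1 + i - j))
    (hV : ∀ i j, V i j = x j ^ (i : ℕ))
    (hW : W = Matrix.diagonal w)
    (hR : ∀ i j, R i j = if (i : ℕ) + (j : ℕ) = nx - 1 then 1 else 0) :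
    A1 * R = V * W * V.transpose ∧
      A0 * R = V * W * Matrix.diagonal x * V.transpose := by
  -- `e - d` is the offset `n_y + 1 - n_x`, which may be negative
  obtain ⟨d, e, hde⟩ : ∃ d e : ℕ, d + ny + 1 = e + nx :=
    ⟨nx - (ny + 1), ny + 1 - nx, by omega⟩
  have hmoment (m : ℕ) : a (ny + 1 - nx + m) = ∑ k, w k * x k ^ m := by
    rw [show (ny : ℤ) + 1 - nx + m = ((e + m : ℕ) : ℤ) - d by push_cast; omega,
      ← PowerSeries.coeff_X_pow_mul_eq_of_zero_extension haneg ha]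
    exact Lagrange.coeff_X_pow_mul_reverseNodal_mul_inv hxdist hx0 y hw (by simpa using hde) m
  obtain rfl : V = (Matrix.vandermonde x).transpose := Matrix.ext hV
  subst hW
  rw [Matrix.transpose_transpose]
  refine ⟨Matrix.ext fun i j => ?_, Matrix.ext fun i j => ?_⟩
  · rw [Matrix.mul_exchange_apply hR, hA1,
      Matrix.vandermonde_transpose_mul_diagonal_mul_vandermonde, ← hmoment]
    congr 1
    rw [Fin.val_rev]
    omega
  · rw [Matrix.mul_exchange_apply hR, hA0, Matrix.mul_assoc _ (Matrix.diagonal w),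
      Matrix.diagonal_mul_diagonal,
      Matrix.vandermonde_transpose_mul_diagonal_mul_vandermonde]
    simp_rw [mul_assoc, ← pow_succ']
    rw [← hmoment]
    congr 1
    rw [Fin.val_rev]
    omega
end

section
/- Let x_1 < ... < x_n and y_1,...,y_n be real numbers with all x_j distinct from all y_i, p_r(z)=\prod_j (z-x_j), q_r(z)=\prod_j (z-y_j), and w_k = q_r(x_k)/p_r'(x_k). If all weights w_k are positive, then the values are interlaced: after sorting the y_j increasingly, y_1 < x_1 < y_2 < x_2 < ... < y_n < x_n. -/
open Finset Polynomial

theorem prodPosIffEven {ι : Type*} (s : Finset ι) (f : ι → ℝ) (hf : ∀ i ∈ s, f i ≠ 0) :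
    (0 < ∏ i ∈ s, f i ↔ Even (s.filter (fun i => f i < 0)).card) := by
  classical
  induction s using Finset.induction_on with
  | empty => simp
  | @insert a s ha ih =>
    have hfa : f a ≠ 0 := hf a (mem_insert_self a s)
    have ihs := ih (fun i hi => hf i (mem_insert_of_mem hi))
    rw [prod_insert ha, filter_insert]
    by_cases hlt : f a < 0
    · rw [if_pos hlt, card_insert_of_notMem (fun h => ha (mem_filter.mp h).1)]
      rw [mul_pos_iff]
      constructor
      · rintro (⟨h1, _⟩ | ⟨_, h2⟩)
        · exact absurd h1 (not_lt.mpr hlt.le)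
        · have : ¬ (0 < ∏ i ∈ s, f i) := not_lt.mpr h2.le
          rw [ihs] at this
          rw [Nat.even_add_one]
          simpa using this
      · intro h
        right
        refine ⟨hlt, ?_⟩
        rw [Nat.even_add_one] at h
        have h2 : ¬ (0 < ∏ i ∈ s, f i) := by rw [ihs]; exact h
        rcases (not_lt.mp h2).lt_or_eq with h3 | h3
        · exact h3
        · exact absurd h3 (Finset.prod_ne_zero_iff.mpr (fun i hi => hf i (mem_insert_of_mem hi)))
    · rw [if_neg hlt]
      have hpos : 0 < f a := (hf a (mem_insert_self a s)).lt_or_gt.resolve_left hlt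
      rw [← ihs]
      constructor
      · intro h
        nlinarith [mul_pos_iff.mp h]
      · exact fun h => mul_pos hpos h

theorem growAux {N : ℕ} (f : Fin N → ℕ)
    (h : ∀ i j : Fin N, i.val + 1 = j.val → f i < f j) :
    ∀ (d : ℕ) (i j : Fin N), i.val + d = j.val → f i + d ≤ f j := by
  intro d
  induction d with
  | zero =>
    intro i j hij
    have h : i = j := Fin.ext (by omega)
    rw [h]
    simp
  | succ d ih =>
    intro i j hij
    have hj' : i.val + d < N := by omega
    have h1 := ih i ⟨i.val + d, hj'⟩ rfl
    have h2 := h ⟨i.val + d, hj'⟩ j (by simp; omega)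
    omega

theorem lowerSetMem {N : ℕ} (S : Finset (Fin N))
    (hS : ∀ i j : Fin N, i ≤ j → j ∈ S → i ∈ S) (j : Fin N) :
    j ∈ S ↔ j.val < S.card := by
  constructor
  · intro hj
    have hsub : Finset.Iic j ⊆ S := fun i hi => hS i j (mem_Iic.mp hi) hj
    have := Finset.card_le_card hsub
    rw [Fin.card_Iic] at this
    omega
  · intro hj
    by_contra hjs
    have hsub : S ⊆ Finset.Iio j := by
      intro i hi
      rw [mem_Iio]
      rcases lt_or_ge i j with h | h
      · exact h
      · exact absurd (hS j i h hi) hjs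
    have := Finset.card_le_card hsub
    rw [Fin.card_Iio] at this
    omega

/-- Interlacing from positive weights: if `x_1 < ⋯ < x_n`, all `x_j` distinct from
all `y_i`, and the weights `w_k = q_r(x_k)/p_r'(x_k)` are all positive, then after
sorting the `y_i` increasingly the branch values interlace:
`y_1 < x_1 < y_2 < x_2 < ⋯ < y_n < x_n`. -/
theorem stmt_17 (n : ℕ) (x y : Fin n → ℝ) (hx : StrictMono x)
    (hxy : ∀ i j, x i ≠ y j)
    (w : Fin n → ℝ)
    (hw : ∀ k, w k = (∏ i, (X - C (y i)) : ℝ[X]).eval (x k) /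
        (derivative (∏ j, (X - C (x j)) : ℝ[X])).eval (x k))
    (hwpos : ∀ k, 0 < w k) :
    ∃ σ : Equiv.Perm (Fin n),
      (∀ k, y (σ k) < x k) ∧ ∀ k l : Fin n, k < l → x k < y (σ l) := by
  classical
  rcases Nat.eq_zero_or_pos n with hn | hn
  · subst hn
    exact ⟨1, fun k => k.elim0, fun k => k.elim0⟩
  set m : Fin n → ℕ := fun k => (univ.filter (fun j => y j < x k)).card with hmdef
  set a : Fin n → ℕ := fun k => (univ.filter (fun i => x k - y i < 0)).card with hadef
  -- evaluations
  have hP : ∀ k, (∏ i, (X - C (y i)) : ℝ[X]).eval (x k) = ∏ i, (x k - y i) := by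
    intro k; simp [eval_prod]
  have hQ : ∀ k, (derivative (∏ j, (X - C (x j)) : ℝ[X])).eval (x k)
      = ∏ j ∈ univ.erase k, (x k - x j) := by
    intro k
    have h1 : (∏ j, (X - C (x j)) : ℝ[X]) = Lagrange.nodal univ x := rfl
    rw [h1, Lagrange.eval_nodal_derivative_eval_node_eq (mem_univ k), Lagrange.eval_nodal]
  -- parity facts
  have hma : ∀ k, m k + a k = n := by
    intro k
    have h1 : (univ.filter (fun i => x k - y i < 0)) =
        (univ.filter (fun j => ¬ (y j < x k))) := by
      apply filter_congr
      intro i _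
      have hne : x k ≠ y i := hxy k i
      constructor
      · intro h; exact not_lt.mpr (by linarith)
      · intro h; have := hne.lt_or_gt.resolve_right h
        linarith
    rw [hmdef, hadef]
    simp only [h1]
    rw [card_filter_add_card_filter_not, card_univ, Fintype.card_fin]
  have hb : ∀ k : Fin n, ((univ.erase k).filter (fun j => x k - x j < 0)).card = n - 1 - k := by
    intro k
    have h1 : (univ.erase k).filter (fun j => x k - x j < 0) = Ioi k := by
      ext j
      simp only [mem_filter, mem_erase, mem_univ, mem_Ioi, true_and, and_true, sub_neg]
      constructor
      · rintro ⟨_, h⟩; exact hx.lt_iff_lt.mp h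
      · intro h; exact ⟨h.ne', hx.lt_iff_lt.mpr h⟩
    rw [h1, Fin.card_Ioi]
  have hpar : ∀ k : Fin n, (m k + k.val + 1) % 2 = 0 := by
    intro k
    have hwk := hwpos k
    rw [hw k, hP, hQ] at hwk
    have hPa : (0 < ∏ i, (x k - y i)) ↔ Even (a k) :=
      prodPosIffEven univ _ (fun i _ => sub_ne_zero.mpr (hxy k i))
    have hQb : (0 < ∏ j ∈ univ.erase k, (x k - x j)) ↔
        Even (((univ.erase k).filter (fun j => x k - x j < 0)).card) :=
      prodPosIffEven _ _ (fun j hj => sub_ne_zero.mpr (hx.injective.ne (mem_erase.mp hj).1.symm))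
    rw [div_pos_iff] at hwk
    have heab : Even (a k + (n - 1 - k.val)) := by
      rw [← hb k]
      rcases hwk with ⟨h1, h2⟩ | ⟨h1, h2⟩
      · exact Nat.even_add.mpr (iff_of_true (hPa.mp h1) (hQb.mp h2))
      · have ha' : ¬ Even (a k) := by
          rw [← hPa]; intro h; linarith
        have hb' : ¬ Even (((univ.erase k).filter (fun j => x k - x j < 0)).card) := by
          rw [← hQb]; intro h; linarith
        exact Nat.even_add.mpr (iff_of_false ha' hb')
    have h3 := hma k
    have h4 : k.val < n := k.isLt
    rw [Nat.even_iff] at heab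
    omega
  -- strict growth
  have hmono : ∀ i j : Fin n, i ≤ j → m i ≤ m j := by
    intro i j hij
    apply card_le_card
    intro t ht
    simp only [mem_filter, mem_univ, true_and] at ht ⊢
    exact lt_of_lt_of_le ht (hx.monotone hij)
  have hstrict : ∀ i j : Fin n, i.val + 1 = j.val → m i < m j := by
    intro i j hij
    have h1 := hmono i j (by omega)
    have h2 := hpar i
    have h3 := hpar j
    omega
  have hgrow := growAux m hstrict
  have hmk : ∀ k : Fin n, m k = k.val + 1 := by
    intro k
    have h0 : (⟨0, hn⟩ : Fin n) ≤ k := by simp [Fin.le_def]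
    have hlow := hgrow k.val ⟨0, hn⟩ k (by simp)
    have hp0 := hpar ⟨0, hn⟩
    set j0 : Fin n := ⟨n - 1, by omega⟩ with hj0
    have hhigh := hgrow (n - 1 - k.val) k j0 (by simp [hj0]; omega)
    have htop : m j0 ≤ n := by
      calc m j0 ≤ univ.card := card_filter_le _ _
        _ = n := by simp
    have h4 : k.val < n := k.isLt
    have hj0v : j0.val = n - 1 := rfl
    have h00 : (⟨0, hn⟩ : Fin n).val = 0 := rfl
    rw [h00] at hp0
    omega
  -- construct σ
  set σ := Tuple.sort y with hσ
  have hsmono : Monotone (y ∘ σ) := Tuple.monotone_sort y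
  have hScard : ∀ k : Fin n, (univ.filter (fun j => y (σ j) < x k)).card = m k := by
    intro k
    rw [hmdef]
    apply Finset.card_bij (fun j _ => σ j)
    · intro j hj
      simp only [mem_filter, mem_univ, true_and] at hj ⊢
      exact hj
    · intro j _ j' _ hjj'
      exact σ.injective hjj'
    · intro i hi
      refine ⟨σ.symm i, ?_, by simp⟩
      simp only [mem_filter, mem_univ, true_and, Equiv.apply_symm_apply] at hi ⊢
      exact hi
  have hmem : ∀ k j : Fin n, y (σ j) < x k ↔ j.val ≤ k.val := by
    intro k j
    have hls := lowerSetMem (univ.filter (fun j => y (σ j) < x k)) ?_ j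
    · rw [hScard, hmk] at hls
      simp only [mem_filter, mem_univ, true_and] at hls
      rw [hls]
      omega
    · intro i j' hij' hj'
      simp only [mem_filter, mem_univ, true_and] at hj' ⊢
      calc y (σ i) ≤ y (σ j') := hsmono hij'
        _ < x k := hj'
  refine ⟨σ, fun k => (hmem k k).mpr le_rfl, fun k l hkl => ?_⟩
  have h1 : ¬ y (σ l) < x k := by
    intro h
    have := (hmem k l).mp h
    have : k.val < l.val := hkl
    omega
  exact lt_of_le_of_ne (not_lt.mp h1) (hxy k (σ l))
end

section
/- Let m_k = \sum_{j=1}^{n_x} x_j^k - \sum_{j=1}^{n_y} y_j^k for k = 1,...,K+1 where K = n_x + n_y, let a_k be the exponential transform (a_0=1, k a_k = \sum_{j=1}^k m_j a_{k-j}), and let c = (1, c_1, ..., c_{n_x}) be the coefficient vector of p(z) = \prod_j (1 - x_j z). Then a_{K+1} = -\sum_{j=1}^{n_x} c_j a_{K+1-j}, and consequently m_{K+1} = -(K+1)\sum_{j=1}^{n_x} c_j a_{K+1-j} - \sum_{j=1}^{K} m_j a_{K+1-j}. -/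
/-! With `A = ∑ aₖ Xᵏ`, the recurrence says `X A' = (∑_{k ≥ 1} mₖ Xᵏ) A` up to order `K + 1`, and
Newton's identities say `X P' = -(∑_{k ≥ 1} pₖ(x) Xᵏ) P` for `P = ∏ (1 - xⱼ X)`, where `pₖ` is the
`k`-th power sum. Since `mₖ = pₖ(x) - pₖ(y)`, both `P A` and `Q = ∏ (1 - yⱼ X)` solve
`X F' = -(∑_{k ≥ 1} pₖ(y) Xᵏ) F` with `F(0) = 1` up to order `K + 1`, and this first-order equation
determines `F` modulo `X ^ (K + 2)`. So `P A ≡ Q`, and as `deg Q = n_y ≤ K` the coefficient of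
`X ^ (K + 1)` in `P A`, namely `a_{K+1} + ∑ cⱼ a_{K+1-j}`, vanishes. -/

open Finset Polynomial

theorem Derivation.map_prod_eq_sum_mul {R A ι : Type*} [CommRing R] [CommRing A] [Algebra R A]
    (D : Derivation R A A) (s : Finset ι) (f g : ι → A) (hfg : ∀ i ∈ s, D (f i) = g i * f i) :
    D (∏ i ∈ s, f i) = (∑ i ∈ s, g i) * ∏ i ∈ s, f i := by
  induction s using Finset.cons_induction with
  | empty => simp
  | cons a s ha ih =>
    rw [forall_mem_cons] at hfg
    rw [prod_cons, sum_cons, D.leibniz, smul_eq_mul, smul_eq_mul, ih hfg.2, hfg.1]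
    ring

namespace PowerSeries

section CommRing

variable {R ι : Type*} [CommRing R]

noncomputable def eulerDeriv : Derivation R R⟦X⟧ R⟦X⟧ := (X : R⟦X⟧) • derivative R

theorem eulerDeriv_apply (f : R⟦X⟧) : eulerDeriv f = X * d⁄dX R f := rfl

theorem coeff_eulerDeriv (f : R⟦X⟧) (n : ℕ) : coeff n (eulerDeriv f) = n * coeff n f := by
  rcases n with _ | n
  · simp [eulerDeriv_apply]
  · rw [eulerDeriv_apply, coeff_succ_X_mul, coeff_derivative, mul_comm]
    push_cast
    rfl

theorem mk_pow_mul_one_sub_C_mul_X (r : R) : mk (r ^ ·) * (1 - C r * X) = 1 := by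
  simpa [rescale_mk, rescale_X] using congrArg (rescale r) (mk_one_mul_one_sub_eq_one (S := R))

theorem eulerDeriv_one_sub_C_mul_X (r : R) :
    eulerDeriv (1 - C r * X) = -(mk (r ^ ·) - 1) * (1 - C r * X) := by
  have h : eulerDeriv (1 - C r * X) = -(C r * X) := by
    simp [eulerDeriv_apply, mul_comm]
  linear_combination h + mk_pow_mul_one_sub_C_mul_X r

noncomputable def powerSumSeries (s : Finset ι) (x : ι → R) : R⟦X⟧ :=
  ∑ i ∈ s, (mk (x i ^ ·) - 1)

@[simp]
theorem constantCoeff_powerSumSeries (s : Finset ι) (x : ι → R) :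
    constantCoeff (powerSumSeries s x) = 0 := by
  simp [powerSumSeries]

theorem coeff_powerSumSeries (s : Finset ι) (x : ι → R) {n : ℕ} (hn : n ≠ 0) :
    coeff n (powerSumSeries s x) = ∑ i ∈ s, x i ^ n := by
  simp only [powerSumSeries, map_sum, map_sub, coeff_mk, coeff_one, hn, if_false, sub_zero]

theorem eulerDeriv_prod_one_sub_C_mul_X (s : Finset ι) (x : ι → R) :
    eulerDeriv (∏ i ∈ s, (1 - C (x i) * X)) =
      -powerSumSeries s x * ∏ i ∈ s, (1 - C (x i) * X) := by
  rw [powerSumSeries, ← sum_neg_distrib]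
  exact eulerDeriv.map_prod_eq_sum_mul s (fun i ↦ 1 - C (x i) * X) (fun i ↦ -(mk (x i ^ ·) - 1))
    fun i _ ↦ eulerDeriv_one_sub_C_mul_X (x i)

theorem coe_prod_one_sub_C_mul_X (s : Finset ι) (x : ι → R) :
    ((∏ i ∈ s, (1 - Polynomial.C (x i) * Polynomial.X) : R[X]) : R⟦X⟧) =
      ∏ i ∈ s, (1 - C (x i) * X) := by
  rw [← Polynomial.coeToPowerSeries.ringHom_apply, map_prod]
  simp

theorem coeff_prod_one_sub_C_mul_X_of_card_lt (s : Finset ι) (x : ι → R) {n : ℕ}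
    (hn : s.card < n) : coeff n (∏ i ∈ s, (1 - C (x i) * X)) = 0 := by
  rw [← coe_prod_one_sub_C_mul_X, Polynomial.coeff_coe]
  refine Polynomial.coeff_eq_zero_of_natDegree_lt ((Polynomial.natDegree_prod_le _ _).trans_lt ?_)
  refine lt_of_le_of_lt (sum_le_card_nsmul _ _ 1 fun i _ ↦ ?_) (by simpa using hn)
  compute_degree

theorem coeff_mul_eq_add_sum_Icc (f g : R⟦X⟧) (n : ℕ) :
    coeff n (f * g) =
      constantCoeff f * coeff n g + ∑ j ∈ Icc 1 n, coeff j f * coeff (n - j) g := by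
  rw [coeff_mul, Nat.sum_antidiagonal_eq_sum_range_succ_mk, range_eq_Ico,
    sum_eq_sum_Ico_succ_bot n.succ_pos]
  simp [Ico_add_one_right_eq_Icc]

theorem X_pow_dvd_eulerDeriv_mk_sub_mul {n : ℕ} {a : ℕ → R} {G : R⟦X⟧}
    (hG : constantCoeff G = 0)
    (h : ∀ k, 1 ≤ k → k < n → (k : R) * a k = ∑ j ∈ Icc 1 k, coeff j G * a (k - j)) :
    X ^ n ∣ eulerDeriv (mk a) - G * mk a := by
  rw [X_pow_dvd_iff]
  intro k hk
  rw [map_sub, coeff_eulerDeriv, coeff_mul_eq_add_sum_Icc, hG, sub_eq_zero]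
  rcases Nat.eq_zero_or_pos k with rfl | hk0
  · simp
  · simpa using h k hk0 hk

end CommRing

section CharZero

variable {R ι κ : Type*} [CommRing R] [IsDomain R] [CharZero R]

theorem X_pow_dvd_sub_of_eulerDeriv_sub_mul {n : ℕ} {f g h : R⟦X⟧} (hh : constantCoeff h = 0)
    (hfg : constantCoeff f = constantCoeff g)
    (hf : X ^ n ∣ eulerDeriv f - h * f) (hg : X ^ n ∣ eulerDeriv g - h * g) :
    X ^ n ∣ f - g := by
  set d := f - g
  have hd : X ^ n ∣ eulerDeriv d - h * d := by
    convert dvd_sub hf hg using 1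
    simp only [d, map_sub]
    ring
  suffices ∀ k ≤ n, X ^ k ∣ d from this n le_rfl
  intro k
  induction k with
  | zero => simp
  | succ k ih =>
    intro hk
    have hdk := ih (by omega)
    -- `X ∣ h` makes `h * d` vanish to order `k + 1`, so the `k`-th coefficient
    -- `k * coeff k d` of `eulerDeriv d` is zero.
    have hhd : X ^ (k + 1) ∣ h * d := by
      rw [pow_succ']
      exact mul_dvd_mul (X_dvd_iff.mpr hh) hdk
    have heuler : X ^ (k + 1) ∣ eulerDeriv d := by
      simpa using dvd_add ((pow_dvd_pow X hk).trans hd) hhd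
    have hcoeff : coeff k d = 0 := by
      have := X_pow_dvd_iff.mp heuler k k.lt_succ_self
      rw [coeff_eulerDeriv] at this
      rcases k with _ | k
      · simp [d, hfg]
      · exact (mul_eq_zero.mp this).resolve_left (Nat.cast_ne_zero.mpr k.succ_ne_zero)
    rw [X_pow_dvd_iff] at hdk ⊢
    intro i hi
    rcases Nat.lt_succ_iff_lt_or_eq.mp hi with hi | rfl
    exacts [hdk i hi, hcoeff]

theorem X_pow_dvd_prod_mul_sub_prod (s : Finset ι) (t : Finset κ) (x : ι → R) (y : κ → R)
    {n : ℕ} {A : R⟦X⟧} (hA0 : constantCoeff A = 1)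
    (hA : X ^ n ∣ eulerDeriv A - (powerSumSeries s x - powerSumSeries t y) * A) :
    X ^ n ∣ (∏ i ∈ s, (1 - C (x i) * X)) * A - ∏ i ∈ t, (1 - C (y i) * X) := by
  refine X_pow_dvd_sub_of_eulerDeriv_sub_mul (h := -powerSumSeries t y) (by simp) (by simp [hA0])
    ?_ ?_
  · convert hA.mul_left (∏ i ∈ s, (1 - C (x i) * X)) using 1
    rw [eulerDeriv.leibniz, eulerDeriv_prod_one_sub_C_mul_X, smul_eq_mul, smul_eq_mul]
    ring
  · simp [eulerDeriv_prod_one_sub_C_mul_X]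

theorem add_sum_coeff_prod_one_sub_C_mul_X_mul_eq_zero (s : Finset ι) (t : Finset κ)
    (x : ι → R) (y : κ → R) {n : ℕ} (hn : s.card + t.card < n) {a : ℕ → R} (ha0 : a 0 = 1)
    (ha : ∀ k, 1 ≤ k → k ≤ n →
      (k : R) * a k = ∑ j ∈ Icc 1 k, (∑ i ∈ s, x i ^ j - ∑ i ∈ t, y i ^ j) * a (k - j)) :
    a n + ∑ j ∈ Icc 1 s.card, coeff j (∏ i ∈ s, (1 - C (x i) * X)) * a (n - j) = 0 := by
  have hA : X ^ (n + 1) ∣ eulerDeriv (mk a) - (powerSumSeries s x - powerSumSeries t y) * mk a := by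
    refine X_pow_dvd_eulerDeriv_mk_sub_mul (by simp) fun k hk1 hk ↦ ?_
    rw [ha k hk1 (by omega)]
    refine sum_congr rfl fun j hj ↦ ?_
    have hj0 : j ≠ 0 := Nat.one_le_iff_ne_zero.mp (mem_Icc.mp hj).1
    rw [map_sub, coeff_powerSumSeries _ _ hj0, coeff_powerSumSeries _ _ hj0]
  have hPA := X_pow_dvd_iff.mp (X_pow_dvd_prod_mul_sub_prod s t x y (by simp [ha0]) hA) n
    n.lt_succ_self
  rw [map_sub, coeff_prod_one_sub_C_mul_X_of_card_lt _ _ (by omega), sub_zero,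
    coeff_mul_eq_add_sum_Icc, ← sum_subset (Icc_subset_Icc_right (by omega : s.card ≤ n))] at hPA
  · simpa using hPA
  · intro j hj hjs
    rw [coeff_prod_one_sub_C_mul_X_of_card_lt _ _ (by simp only [mem_Icc, not_and, not_le] at hj hjs; omega), zero_mul]

end CharZero

end PowerSeries

/-- Correctness of Algorithm 3: with `m_k = ∑ x_j^k - ∑ y_j^k` for `k = 1,…,K+1`
(`K = n_x+n_y`), `a_k` the exponential transform of the moments and `c` the
coefficient vector of `p(z) = ∏ (1 - x_j z)`, one has
`a_{K+1} = -∑_{j=1}^{n_x} c_j a_{K+1-j}` and hence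
`m_{K+1} = -(K+1) ∑_{j=1}^{n_x} c_j a_{K+1-j} - ∑_{j=1}^{K} m_j a_{K+1-j}`. -/
theorem stmt_18 (nx ny : ℕ) (K : ℕ) (hK : K = nx + ny)
    (x : Fin nx → ℝ) (y : Fin ny → ℝ) (m a : ℕ → ℝ)
    (hm : ∀ k : ℕ, 1 ≤ k → k ≤ K + 1 → m k = ∑ j, x j ^ k - ∑ i, y i ^ k)
    (ha0 : a 0 = 1)
    (harec : ∀ k : ℕ, 1 ≤ k → k ≤ K + 1 →
      (k : ℝ) * a k = ∑ j ∈ Icc 1 k, m j * a (k - j))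
    (c : ℕ → ℝ)
    (hc : ∀ j : ℕ, c j = (∏ i, (1 - C (x i) * X) : ℝ[X]).coeff j) :
    a (K + 1) = -∑ j ∈ Icc 1 nx, c j * a (K + 1 - j) ∧
      m (K + 1) = -((K : ℝ) + 1) * ∑ j ∈ Icc 1 nx, c j * a (K + 1 - j) -
        ∑ j ∈ Icc 1 K, m j * a (K + 1 - j) := by
  have hsum := PowerSeries.add_sum_coeff_prod_one_sub_C_mul_X_mul_eq_zero univ univ x y
    (n := K + 1) (by simp only [card_univ, Fintype.card_fin]; omega) ha0 fun k hk1 hk ↦ by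
      rw [harec k hk1 hk]
      exact sum_congr rfl fun j hj ↦ by rw [hm j (mem_Icc.mp hj).1 ((mem_Icc.mp hj).2.trans hk)]
  have ha_succ : a (K + 1) = -∑ j ∈ Icc 1 nx, c j * a (K + 1 - j) := by
    simp only [hc, ← Polynomial.coeff_coe, PowerSeries.coe_prod_one_sub_C_mul_X]
    simpa [eq_neg_iff_add_eq_zero] using hsum
  refine ⟨ha_succ, ?_⟩
  have hr := harec (K + 1) (by omega) le_rfl
  rw [sum_Icc_succ_top (by omega), Nat.sub_self, ha0, mul_one, ha_succ] at hr
  push_cast at hr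
  linarith
end
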